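/- arXiv:1302.3927 — 12 statements merged into one kernel-verified Lean document; each statement's English description precedes it below -/
import Mathlib

section
/- Let M be a von Neumann algebra, P₁ ∈ M a nontrivial core-free projection with central carrier I, P₂ = I − P₁, and M_{ij} = P_i M P_j for i, j ∈ {1,2}. Let ξ be a complex scalar with ξ ≠ 0 and ξ ≠ 1, let {i, j} = {1, 2}, and let T ∈ M. Then [T, N]_ξ = 0 for every N ∈ M_{ij} if and only if T ∈ M_{ij} + (ξP_i + P_j)Z_M, i.e., there exist T_{ij} ∈ M_{ij} and Z ∈ Z_M with T = T_{ij} + (ξP_i + P_j)Z. -/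
variable {H : Type*} [NormedAddCommGroup H] [InnerProductSpace ℂ H] [CompleteSpace H]

/-- `P` is a projection (self-adjoint idempotent) belonging to the
von Neumann algebra `M`. -/
def VNProjection (M : VonNeumannAlgebra H) (P : H →L[ℂ] H) : Prop :=
  P ∈ M ∧ IsSelfAdjoint P ∧ P * P = P

/-- `Z` is a central projection of `M`: a projection in `M` commuting with every
element of `M`. -/
def VNCentralProjection (M : VonNeumannAlgebra H) (Z : H →L[ℂ] H) : Prop :=
  VNProjection M Z ∧ ∀ T ∈ M, Z * T = T * Z

/-- `P` is core-free: the only central projection `Q` of `M` with `Q ≤ P` is `0`. -/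
def VNCoreFree (M : VonNeumannAlgebra H) (P : H →L[ℂ] H) : Prop :=
  ∀ Q, VNCentralProjection M Q → Q * P = Q → Q = 0

/-- `Z` is the central carrier of `A`: the smallest central projection of `M`
with `Z * A = A`. -/
def VNCentralCarrier (M : VonNeumannAlgebra H) (A Z : H →L[ℂ] H) : Prop :=
  VNCentralProjection M Z ∧ Z * A = A ∧
    ∀ Q, VNCentralProjection M Q → Q * A = A → Z * Q = Z

/-- `M` has no central summands of type I₁: for every nonzero central projection `Z`
there are `A, B ∈ M` with `Z * (A * B - B * A) ≠ 0`. -/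
def VNNoTypeI1 (M : VonNeumannAlgebra H) : Prop :=
  ∀ Z, VNCentralProjection M Z → Z ≠ 0 → ∃ A ∈ M, ∃ B ∈ M, Z * (A * B - B * A) ≠ 0

open scoped InnerProductSpace in
/-- An orthogonal projection commutes with any operator leaving the subspace
invariant together with its adjoint. -/
lemma orthProj_commute (K : Submodule ℂ H) [CompleteSpace K] (T : H →L[ℂ] H)
    (h1 : ∀ x ∈ K, T x ∈ K) (h2 : ∀ x ∈ K, (star T) x ∈ K) :
    (K.subtypeL ∘L K.orthogonalProjectionOnto) * T = T * (K.subtypeL ∘L K.orthogonalProjectionOnto) := by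
  set Q := K.subtypeL ∘L K.orthogonalProjectionOnto with hQ
  have hQmem : ∀ y ∈ K, Q y = y := by
    intro y hy
    simpa [hQ] using K.starProjection_eq_self_iff.mpr hy
  have hQorth : ∀ z ∈ Kᗮ, Q z = 0 := by
    intro z hz
    simp [hQ, Submodule.orthogonalProjectionOnto_apply_of_mem_orthogonal hz]
  ext x
  obtain ⟨y, hy, z, hz, hx⟩ := K.exists_add_mem_mem_orthogonal x
  have hTz : T z ∈ Kᗮ := by
    rw [Submodule.mem_orthogonal]
    intro u hu
    have h3 : ⟪u, T z⟫_ℂ = ⟪(star T) u, z⟫_ℂ := by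
      rw [ContinuousLinearMap.star_eq_adjoint, ContinuousLinearMap.adjoint_inner_left]
    rw [h3]
    exact (Submodule.mem_orthogonal K z).mp hz _ (h2 u hu)
  have e1 : Q x = y := by
    rw [hx, map_add, hQmem y hy, hQorth z hz, add_zero]
  have e2 : Q (T x) = T y := by
    rw [hx, map_add, map_add, hQmem _ (h1 y hy), hQorth _ hTz, add_zero]
  simp only [ContinuousLinearMap.mul_apply, e1, e2]

/-- Density lemma: if every central projection dominating `P` is `1`, then
`X M P = 0` forces `X = 0`. -/
lemma vn_density (M : VonNeumannAlgebra H) (P : H →L[ℂ] H) (hP : P ∈ M)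
    (hcar : ∀ Q, VNCentralProjection M Q → Q * P = P → Q = 1)
    (X : H →L[ℂ] H) (hX : ∀ A ∈ M, X * A * P = 0) : X = 0 := by
  classical
  set s : Set H := {y | ∃ A ∈ M, ∃ h : H, A (P h) = y} with hs
  set K₀ : Submodule ℂ H := Submodule.span ℂ s with hK₀
  set K : Submodule ℂ H := K₀.topologicalClosure with hK
  haveI : CompleteSpace K := K₀.isClosed_topologicalClosure.completeSpace_coe
  set Q : H →L[ℂ] H := K.subtypeL ∘L K.orthogonalProjectionOnto with hQ
  have hKcl : (K : Set H) = closure (K₀ : Set H) := rfl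
  have hinv : ∀ T : H →L[ℂ] H, (∀ y ∈ s, T y ∈ s) → ∀ x ∈ K, T x ∈ K := by
    intro T hTs x hx
    have hmap : Submodule.map (T : H →ₗ[ℂ] H) K₀ ≤ K₀ := by
      rw [hK₀, Submodule.map_span]
      exact Submodule.span_mono (Set.image_subset_iff.mpr fun y hy => hTs y hy)
    have hmapsto : Set.MapsTo T (K₀ : Set H) (K₀ : Set H) := by
      intro y hy
      exact hmap ⟨y, hy, rfl⟩
    have hx' : x ∈ closure (K₀ : Set H) := hx
    have := map_mem_closure T.continuous hx' hmapsto
    exact this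
  have hsM : ∀ T ∈ M, ∀ y ∈ s, T y ∈ s := by
    rintro T hT y ⟨A, hA, h, rfl⟩
    exact ⟨T * A, mul_mem hT hA, h, rfl⟩
  have hsC : ∀ T ∈ M.commutant, ∀ y ∈ s, T y ∈ s := by
    rintro T hT y ⟨A, hA, h, rfl⟩
    refine ⟨A, hA, T h, ?_⟩
    have hc : (A * P) * T = T * (A * P) :=
      VonNeumannAlgebra.mem_commutant_iff.mp hT (A * P) (mul_mem hA hP)
    calc A (P (T h)) = ((A * P) * T) h := rfl
      _ = (T * (A * P)) h := by rw [hc]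
      _ = T (A (P h)) := rfl
  have hQcommM : ∀ T ∈ M, Q * T = T * Q := by
    intro T hT
    exact orthProj_commute K T (hinv T (hsM T hT)) (hinv _ (hsM _ (star_mem hT)))
  have hQcommC : ∀ T ∈ M.commutant, Q * T = T * Q := by
    intro T hT
    exact orthProj_commute K T (hinv T (hsC T hT)) (hinv _ (hsC _ (star_mem hT)))
  have hQM : Q ∈ M := by
    rw [← VonNeumannAlgebra.commutant_commutant M]
    rw [VonNeumannAlgebra.mem_commutant_iff]
    intro g hg
    exact (hQcommC g hg).symm
  have hQmem : ∀ y ∈ K, Q y = y := by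
    intro y hy
    simpa [hQ] using K.starProjection_eq_self_iff.mpr hy
  have hsK : s ⊆ (K : Set H) := fun y hy =>
    subset_closure (Submodule.subset_span hy)
  have hQP : Q * P = P := by
    ext h
    have hPh : P h ∈ s := ⟨1, one_mem M, h, by simp⟩
    simpa using hQmem (P h) (hsK hPh)
  have hQproj : VNCentralProjection M Q := by
    refine ⟨⟨hQM, ?_, ?_⟩, hQcommM⟩
    · exact isSelfAdjoint_starProjection K
    · ext x
      have : Q x ∈ K := (K.orthogonalProjectionOnto x).2
      simpa using hQmem _ this
  have hQ1 : Q = 1 := hcar Q hQproj hQP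
  have hXK₀ : ∀ y ∈ (K₀ : Set H), X y ∈ ({0} : Set H) := by
    intro y hy
    have : K₀ ≤ LinearMap.ker (X : H →ₗ[ℂ] H) := by
      rw [hK₀, Submodule.span_le]
      rintro z ⟨A, hA, h, rfl⟩
      have := hX A hA
      have h2 : (X * A * P) h = 0 := by rw [this]; rfl
      simpa using h2
    simpa using this hy
  ext x
  have hxK : x ∈ K := by
    have : Q x = x := by rw [hQ1]; rfl
    rw [← this]
    exact (K.orthogonalProjectionOnto x).2
  have hx' : x ∈ closure (K₀ : Set H) := hxK
  have := map_mem_closure X.continuous hx' hXK₀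
  rw [closure_singleton] at this
  simpa using this

/-- **Lemma 2.2.** For `T ∈ M` and `ξ ≠ 0, 1`: `[T, N]_ξ = 0` for every `N ∈ M_{ij}`
(with `{i,j} = {1,2}`) if and only if `T ∈ M_{ij} + (ξ P_i + P_j) Z_M`. -/
theorem xiLie_commutant_of_corner (M : VonNeumannAlgebra H)
    (P₁ : H →L[ℂ] H) (hproj : VNProjection M P₁)
    (hnt : P₁ ≠ 0 ∧ P₁ ≠ 1) (hcf : VNCoreFree M P₁)
    (hcc : VNCentralCarrier M P₁ 1)
    (ξ : ℂ) (hξ0 : ξ ≠ 0) (hξ1 : ξ ≠ 1)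
    (Pi Pj : H →L[ℂ] H)
    (hij : (Pi = P₁ ∧ Pj = 1 - P₁) ∨ (Pi = 1 - P₁ ∧ Pj = P₁))
    (T : H →L[ℂ] H) (hT : T ∈ M) :
    (∀ N ∈ M, Pi * N * Pj = N → T * N - ξ • (N * T) = 0) ↔
      ∃ T' Z : H →L[ℂ] H, T' ∈ M ∧ Pi * T' * Pj = T' ∧ Z ∈ M ∧
        (∀ S ∈ M, Z * S = S * Z) ∧ T = T' + (ξ • Pi + Pj) * Z := by
  obtain ⟨hP1m, hP1sa, hP1i⟩ := hproj
  have h1m : (1 : H →L[ℂ] H) ∈ M := one_mem M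
  have hP2m : 1 - P₁ ∈ M := sub_mem h1m hP1m
  have hP2i : (1 - P₁) * (1 - P₁) = 1 - P₁ := by
    rw [sub_mul, one_mul, mul_sub, mul_one, hP1i, sub_self, sub_zero]
  have hP12 : P₁ * (1 - P₁) = 0 := by rw [mul_sub, mul_one, hP1i, sub_self]
  have hP21 : (1 - P₁) * P₁ = 0 := by rw [sub_mul, one_mul, hP1i, sub_self]
  have hP2sa : IsSelfAdjoint (1 - P₁) := (IsSelfAdjoint.one _).sub hP1sa
  have hcar1 : ∀ Q, VNCentralProjection M Q → Q * P₁ = P₁ → Q = 1 := by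
    intro Q hQ h
    have := hcc.2.2 Q hQ h
    rwa [one_mul] at this
  have hcar2 : ∀ Q, VNCentralProjection M Q → Q * (1 - P₁) = 1 - P₁ → Q = 1 := by
    intro Q hQ h
    have hQ' : VNCentralProjection M (1 - Q) := by
      refine ⟨⟨sub_mem h1m hQ.1.1, (IsSelfAdjoint.one _).sub hQ.1.2.1, ?_⟩, ?_⟩
      · rw [sub_mul, one_mul, mul_sub, mul_one, hQ.1.2.2, sub_self, sub_zero]
      · intro S hS
        rw [sub_mul, one_mul, mul_sub, mul_one, hQ.2 S hS]
    have e1 : Q * P₁ = Q - (1 - P₁) := by rw [← h, mul_sub, mul_one, sub_sub_cancel]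
    have e2 : (1 - Q) * P₁ = 1 - Q := by rw [sub_mul, one_mul, e1]; abel
    have := hcf (1 - Q) hQ' e2
    have : (1 : H →L[ℂ] H) = Q := by rwa [sub_eq_zero] at this
    exact this.symm
  have hfacts : Pi ∈ M ∧ Pj ∈ M ∧ Pi * Pi = Pi ∧ Pj * Pj = Pj ∧ Pi * Pj = 0 ∧
      Pj * Pi = 0 ∧ Pi + Pj = 1 ∧ IsSelfAdjoint Pi ∧ IsSelfAdjoint Pj ∧
      (∀ Q, VNCentralProjection M Q → Q * Pi = Pi → Q = 1) ∧
      (∀ Q, VNCentralProjection M Q → Q * Pj = Pj → Q = 1) := by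
    rcases hij with ⟨hi, hj⟩ | ⟨hi, hj⟩ <;> subst hi <;> subst hj
    · exact ⟨hP1m, hP2m, hP1i, hP2i, hP12, hP21, by abel, hP1sa, hP2sa, hcar1, hcar2⟩
    · exact ⟨hP2m, hP1m, hP2i, hP1i, hP21, hP12, by abel, hP2sa, hP1sa, hcar2, hcar1⟩
  obtain ⟨hPim, hPjm, hPi2, hPj2, hPiPj, hPjPi, hsum, hPisa, hPjsa, hcari, hcarj⟩ := hfacts
  -- reassociated simp lemmas
  have hPiix : ∀ x : H →L[ℂ] H, Pi * (Pi * x) = Pi * x := fun x => by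
    rw [← mul_assoc, hPi2]
  have hPjjx : ∀ x : H →L[ℂ] H, Pj * (Pj * x) = Pj * x := fun x => by
    rw [← mul_assoc, hPj2]
  have hPijx : ∀ x : H →L[ℂ] H, Pi * (Pj * x) = 0 := fun x => by
    rw [← mul_assoc, hPiPj, zero_mul]
  have hPjix : ∀ x : H →L[ℂ] H, Pj * (Pi * x) = 0 := fun x => by
    rw [← mul_assoc, hPjPi, zero_mul]
  -- density lemmas
  have DLj : ∀ X : H →L[ℂ] H, (∀ A ∈ M, X * A * Pj = 0) → X = 0 :=
    vn_density M Pj hPjm hcarj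
  have DLi : ∀ X : H →L[ℂ] H, (∀ A ∈ M, X * A * Pi = 0) → X = 0 :=
    vn_density M Pi hPim hcari
  have LDi : ∀ Y : H →L[ℂ] H, (∀ A ∈ M, Pi * A * Y = 0) → Y = 0 := by
    intro Y hY
    have hsY : star Y = 0 := by
      refine DLi (star Y) (fun A hA => ?_)
      have h0 := congrArg star (hY (star A) (star_mem hA))
      simpa [star_mul, hPisa.star_eq, mul_assoc] using h0
    have := congrArg star hsY
    simpa using this
  constructor
  · -- forward direction
    intro hcomm
    have hkey : ∀ A ∈ M, T * (Pi * A * Pj) = ξ • ((Pi * A * Pj) * T) := by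
      intro A hA
      have hmem : Pi * A * Pj ∈ M := mul_mem (mul_mem hPim hA) hPjm
      have hc : Pi * (Pi * A * Pj) * Pj = Pi * A * Pj := by
        simp only [mul_assoc, hPiix, hPjjx, hPj2]
      have := hcomm (Pi * A * Pj) hmem hc
      exact sub_eq_zero.mp this
    have hkey' : ∀ A ∈ M, (Pi * T * Pi) * (Pi * A * Pj)
        = ξ • ((Pi * A * Pj) * (Pj * T * Pj)) := by
      intro A hA
      have h0 := congrArg (fun X => Pi * X * Pj) (hkey A hA)
      simpa only [mul_assoc, mul_smul_comm, smul_mul_assoc, hPiix, hPjjx, hPj2, hPi2]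
        using h0
    -- Step 1 : Pj T Pi = 0
    have hTji : Pj * T * Pi = 0 := by
      refine DLj _ (fun A hA => ?_)
      have h0 := congrArg (fun X => Pj * X) (hkey A hA)
      simpa only [mul_assoc, mul_smul_comm, hPjix, mul_zero, zero_mul, smul_zero]
        using h0
    -- commutation with corners
    have c1 : ∀ S ∈ M, (Pi * T * Pi) * (Pi * S * Pi) = (Pi * S * Pi) * (Pi * T * Pi) := by
      intro S hS
      have h0 : (Pi * T * Pi) * (Pi * S * Pi) - (Pi * S * Pi) * (Pi * T * Pi) = 0 := by
        refine DLj _ (fun A hA => ?_)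
        have e1 := hkey' (Pi * S * Pi * A) (mul_mem (mul_mem (mul_mem hPim hS) hPim) hA)
        have e2 := congrArg (fun X => (Pi * S * Pi) * X) (hkey' A hA)
        simp only [sub_mul, mul_assoc, mul_smul_comm, smul_mul_assoc, hPiix, hPjjx,
          hPijx, hPjix, mul_zero, zero_mul, smul_zero] at e1 e2 ⊢
        rw [e1, e2, sub_self]
      exact sub_eq_zero.mp h0
    have c2 : ∀ S ∈ M, (Pj * T * Pj) * (Pj * S * Pj) = (Pj * S * Pj) * (Pj * T * Pj) := by
      intro S hS
      have h0 : (Pj * S * Pj) * (Pj * T * Pj) - (Pj * T * Pj) * (Pj * S * Pj) = 0 := by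
        refine LDi _ (fun A hA => ?_)
        have e1 := hkey' (A * Pj * S) (mul_mem (mul_mem hA hPjm) hS)
        have e2 := congrArg (fun X => X * (Pj * S * Pj)) (hkey' A hA)
        simp only [mul_sub, mul_assoc, mul_smul_comm, smul_mul_assoc, hPiix, hPjjx,
          hPijx, hPjix, mul_zero, zero_mul, smul_zero] at e1 e2 ⊢
        have h1 : ξ • (Pi * (A * (Pj * (S * (Pj * (T * Pj))))))
            - ξ • (Pi * (A * (Pj * (T * (Pj * (S * Pj)))))) = 0 := by
          rw [← e1, ← e2, sub_self]
        have h2 := smul_right_injective (H →L[ℂ] H) hξ0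
          (by simpa [smul_sub] using h1 : ξ • (Pi * (A * (Pj * (S * (Pj * (T * Pj)))))
            - Pi * (A * (Pj * (T * (Pj * (S * Pj)))))) = ξ • (0 : H →L[ℂ] H))
        simpa [sub_eq_zero] using h2
      have := sub_eq_zero.mp h0
      exact this.symm
    have c4 : ∀ S ∈ M, ξ • ((Pj * T * Pj) * (Pj * S * Pi)) = (Pj * S * Pi) * (Pi * T * Pi) := by
      intro S hS
      have h0 : ξ • ((Pj * T * Pj) * (Pj * S * Pi)) - (Pj * S * Pi) * (Pi * T * Pi) = 0 := by
        refine LDi _ (fun A hA => ?_)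
        have hW : ∀ B ∈ M, ((Pi * A * Pj) *
            (ξ • ((Pj * T * Pj) * (Pj * S * Pi)) - (Pj * S * Pi) * (Pi * T * Pi))) * B * Pj
            = 0 := by
          intro B hB
          have e1 := hkey' (A * (Pj * S * Pi) * B)
            (mul_mem (mul_mem hA (mul_mem (mul_mem hPjm hS) hPim)) hB)
          have e2 := congrArg (fun X => X * ((Pj * S * Pi) * (Pi * B * Pj))) (hkey' A hA)
          have e3 := congrArg (fun X => (Pi * A * Pj) * ((Pj * S * Pi) * X)) (hkey' B hB)
          simp only [sub_mul, mul_sub, smul_sub, mul_assoc, mul_smul_comm, smul_mul_assoc,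
            hPiix, hPjjx, hPijx, hPjix, mul_zero, zero_mul, smul_zero] at e1 e2 e3 ⊢
          rw [← e2, e1, ← e3, sub_self]
        have hW0 : (Pi * A * Pj) *
            (ξ • ((Pj * T * Pj) * (Pj * S * Pi)) - (Pj * S * Pi) * (Pi * T * Pi)) = 0 :=
          DLj _ hW
        have h1 := congrArg (fun X => X) hW0
        simp only [mul_sub, mul_smul_comm, mul_assoc, hPiix, hPjjx, hPijx, hPjix,
          mul_zero, zero_mul, smul_zero] at h1 ⊢
        rw [sub_eq_zero] at h1 ⊢
        exact h1
      exact sub_eq_zero.mp h0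
    -- the central element
    set Tii := Pi * T * Pi with hTiidef
    set Tij := Pi * T * Pj with hTijdef
    set Tjj := Pj * T * Pj with hTjjdef
    set Z := ξ⁻¹ • Tii + Tjj with hZdef
    have hTiim : Tii ∈ M := mul_mem (mul_mem hPim hT) hPim
    have hTijm : Tij ∈ M := mul_mem (mul_mem hPim hT) hPjm
    have hTjjm : Tjj ∈ M := mul_mem (mul_mem hPjm hT) hPjm
    have hsmulmem : ∀ (c : ℂ) (X : H →L[ℂ] H), X ∈ M → c • X ∈ M := by
      intro c X hX
      rw [Algebra.smul_def]
      exact mul_mem (M.toStarSubalgebra.algebraMap_mem c) hX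
    have hZm : Z ∈ M := add_mem (hsmulmem _ _ hTiim) hTjjm
    have hZcomm : ∀ S ∈ M, Z * S = S * Z := by
      intro S hS
      have hdecompS : S = Pi * S * Pi + Pi * S * Pj + Pj * S * Pi + Pj * S * Pj := by
        have h0 : (Pi + Pj) * S * (Pi + Pj)
            = Pi * S * Pi + Pi * S * Pj + Pj * S * Pi + Pj * S * Pj := by
          noncomm_ring
        rw [hsum, one_mul, mul_one] at h0
        exact h0
      have zii : Z * (Pi * S * Pi) = (Pi * S * Pi) * Z := by
        rw [hZdef, add_mul, mul_add, smul_mul_assoc, mul_smul_comm, c1 S hS]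
        have ha : Tjj * (Pi * S * Pi) = 0 := by
          rw [hTjjdef]; simp only [mul_assoc, hPjix, mul_zero]
        have hb : (Pi * S * Pi) * Tjj = 0 := by
          rw [hTjjdef]; simp only [mul_assoc, hPijx, mul_zero]
        rw [ha, hb, add_zero]
      have zij : Z * (Pi * S * Pj) = (Pi * S * Pj) * Z := by
        rw [hZdef, add_mul, mul_add, smul_mul_assoc, mul_smul_comm]
        have ha : Tjj * (Pi * S * Pj) = 0 := by
          rw [hTjjdef]; simp only [mul_assoc, hPjix, mul_zero]
        have hb : (Pi * S * Pj) * Tii = 0 := by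
          rw [hTiidef]; simp only [mul_assoc, hPjix, mul_zero]
        rw [ha, hb, smul_zero, add_zero, zero_add, hkey' S hS, inv_smul_smul₀ hξ0]
      have zji : Z * (Pj * S * Pi) = (Pj * S * Pi) * Z := by
        rw [hZdef, add_mul, mul_add, smul_mul_assoc, mul_smul_comm]
        have ha : Tii * (Pj * S * Pi) = 0 := by
          rw [hTiidef]; simp only [mul_assoc, hPijx, mul_zero]
        have hb : (Pj * S * Pi) * Tjj = 0 := by
          rw [hTjjdef]; simp only [mul_assoc, hPijx, mul_zero]
        have hc : Tjj * (Pj * S * Pi) = ξ⁻¹ • ((Pj * S * Pi) * Tii) := by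
          rw [← c4 S hS, inv_smul_smul₀ hξ0]
        rw [ha, hb, hc, smul_zero, zero_add, add_zero]
      have zjj : Z * (Pj * S * Pj) = (Pj * S * Pj) * Z := by
        rw [hZdef, add_mul, mul_add, smul_mul_assoc, mul_smul_comm, c2 S hS]
        have ha : Tii * (Pj * S * Pj) = 0 := by
          rw [hTiidef]; simp only [mul_assoc, hPijx, mul_zero]
        have hb : (Pj * S * Pj) * Tii = 0 := by
          rw [hTiidef]; simp only [mul_assoc, hPjix, mul_zero]
        rw [ha, hb, smul_zero, zero_add]
      conv_lhs => rw [hdecompS]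
      conv_rhs => rw [hdecompS]
      rw [mul_add, mul_add, mul_add, zii, zij, zji, zjj, add_mul, add_mul, add_mul]
    refine ⟨Tij, Z, hTijm, ?_, hZm, hZcomm, ?_⟩
    · rw [hTijdef]; simp only [mul_assoc, hPiix, hPjjx, hPj2]
    · have hdecomp : T = Tii + Tij + Pj * T * Pi + Tjj := by
        have h0 : (Pi + Pj) * T * (Pi + Pj)
            = Pi * T * Pi + Pi * T * Pj + Pj * T * Pi + Pj * T * Pj := by
          noncomm_ring
        rw [hsum, one_mul, mul_one] at h0
        rw [hTiidef, hTijdef, hTjjdef]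
        exact h0
      have hfin : (ξ • Pi + Pj) * Z = Tii + Tjj := by
        rw [hZdef, hTiidef, hTjjdef]
        simp only [add_mul, mul_add, smul_mul_assoc, mul_smul_comm, smul_smul,
          mul_inv_cancel₀ hξ0, inv_mul_cancel₀ hξ0, one_smul, mul_assoc, hPiix, hPjjx, hPijx, hPjix,
          mul_zero, smul_zero, add_zero, zero_add]
      rw [hfin, hdecomp, hTji]
      abel
  · -- backward direction
    rintro ⟨T', Z, hT'm, hT'c, hZm, hZc, rfl⟩ N hN hNc
    have hPjN : Pj * N = 0 := by
      rw [← hNc]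
      simp only [← mul_assoc, hPjPi, zero_mul]
    have hNPi : N * Pi = 0 := by
      rw [← hNc]
      simp only [mul_assoc, hPjPi, mul_zero]
    have hPiN : Pi * N = N := by
      conv_lhs => rw [← hNc]
      rw [← mul_assoc, ← mul_assoc, hPi2, hNc]
    have hNPj : N * Pj = N := by
      conv_lhs => rw [← hNc]
      rw [mul_assoc, mul_assoc, hPj2, ← mul_assoc, hNc]
    have h1 : T' * N = 0 := by
      rw [← hT'c, mul_assoc, hPjN, mul_zero]
    have h2 : N * T' = 0 := by
      rw [← hT'c, ← mul_assoc, ← mul_assoc, hNPi, zero_mul, zero_mul]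
    have key : ((ξ • Pi + Pj) * Z) * N = ξ • (N * Z) := by
      rw [mul_assoc, hZc N hN, ← mul_assoc, add_mul, smul_mul_assoc, hPiN, hPjN,
        add_zero, smul_mul_assoc]
    have key2 : N * ((ξ • Pi + Pj) * Z) = N * Z := by
      rw [← mul_assoc, mul_add, mul_smul_comm, hNPi, smul_zero, zero_add, hNPj]
    rw [add_mul, mul_add, h1, h2, key, key2, zero_add, zero_add, sub_self]
end

section
/- Let M be a von Neumann algebra and ξ a complex scalar with ξ ≠ 0 and ξ ≠ 1. If Φ : M → M is an additive ξ-Lie derivation with Φ(I) = 0, then Φ(ξT) = ξΦ(T) for all T ∈ M, and Φ is an additive Jordan derivation, i.e., Φ(ST + TS) = Φ(S)T + SΦ(T) + Φ(T)S + TΦ(S) for all S, T ∈ M. -/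
variable {H : Type*} [NormedAddCommGroup H] [InnerProductSpace ℂ H] [CompleteSpace H]

/-- An additive ξ-Lie derivation (ξ ≠ 0, 1) with `Φ I = 0` satisfies
`Φ (ξ • T) = ξ • Φ T` and is an additive Jordan derivation. -/
theorem additive_xiLie_derivation_is_jordan (M : VonNeumannAlgebra H)
    (ξ : ℂ) (hξ0 : ξ ≠ 0) (hξ1 : ξ ≠ 1)
    (Φ : (H →L[ℂ] H) → (H →L[ℂ] H))
    (hmaps : ∀ T ∈ M, Φ T ∈ M)
    (hadd : ∀ A ∈ M, ∀ B ∈ M, Φ (A + B) = Φ A + Φ B)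
    (hlie : ∀ A ∈ M, ∀ B ∈ M,
      Φ (A * B - ξ • (B * A)) =
        (Φ A * B - ξ • (B * Φ A)) + (A * Φ B - ξ • (Φ B * A)))
    (hI : Φ 1 = 0) :
    (∀ T ∈ M, Φ (ξ • T) = ξ • Φ T) ∧
      (∀ S ∈ M, ∀ T ∈ M,
        Φ (S * T + T * S) = Φ S * T + S * Φ T + Φ T * S + T * Φ S) := by
  have h0 : Φ 0 = 0 := by
    have := hadd 0 M.zero_mem 0 M.zero_mem
    simpa using this
  have hneg : ∀ A ∈ M, Φ (-A) = -Φ A := by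
    intro A hA
    have := hadd A hA (-A) (M.neg_mem hA)
    simp only [add_neg_cancel, h0] at this
    exact eq_neg_of_add_eq_zero_right this.symm
  have hsub : ∀ A ∈ M, ∀ B ∈ M, Φ (A - B) = Φ A - Φ B := by
    intro A hA B hB
    have := hadd A hA (-B) (M.neg_mem hB)
    rw [hneg B hB] at this
    simpa [sub_eq_add_neg] using this
  have hsmul : ∀ T ∈ M, Φ (ξ • T) = ξ • Φ T := by
    intro T hT
    have h := hlie T hT 1 M.one_mem
    simp only [mul_one, one_mul, hI, mul_zero, zero_mul, smul_zero, sub_zero,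
      add_zero] at h
    rw [hsub T hT (ξ • T) (M.smul_mem hT ξ)] at h
    have : Φ T - Φ (ξ • T) = Φ T - ξ • Φ T := h
    have := sub_right_injective this
    exact this
  constructor
  · exact hsmul
  · intro S hS T hT
    have hST : S * T ∈ M := M.mul_mem hS hT
    have hTS : T * S ∈ M := M.mul_mem hT hS
    have hX : S * T + T * S ∈ M := M.add_mem hST hTS
    have h1 := hlie S hS T hT
    have h2 := hlie T hT S hS
    have hadd2 := hadd (S * T - ξ • (T * S)) (M.sub_mem hST (M.smul_mem hTS ξ))
      (T * S - ξ • (S * T)) (M.sub_mem hTS (M.smul_mem hST ξ))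
    have harg : (S * T - ξ • (T * S)) + (T * S - ξ • (S * T))
        = (S * T + T * S) - ξ • (S * T + T * S) := by
      simp only [smul_add]; abel
    rw [harg, hsub _ hX _ (M.smul_mem hX ξ),
      hsmul _ hX, h1, h2] at hadd2
    have key : (1 - ξ) • (Φ (S * T + T * S)
        - (Φ S * T + S * Φ T + Φ T * S + T * Φ S)) = 0 := by
      simp only [sub_smul, one_smul, smul_sub, smul_add]
      linear_combination (norm := module) hadd2
    rcases smul_eq_zero.mp key with h | h
    · exact absurd (sub_eq_zero.mp h) (fun hc => hξ1 hc.symm)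
    · exact sub_eq_zero.mp h
end

section
/- Let M be a von Neumann algebra, P₁ ∈ M a nontrivial core-free projection with central carrier I, and P₂ = I − P₁. Let Φ : M → M be a nonlinear derivation and set T₀ = P₁Φ(P₁)P₂ − P₂Φ(P₁)P₁. Then the map Ψ : M → M defined by Ψ(T) = Φ(T) − (TT₀ − T₀T) is a nonlinear derivation satisfying Ψ(P₁) = Ψ(P₂) = 0. -/
variable {H : Type*} [NormedAddCommGroup H] [InnerProductSpace ℂ H] [CompleteSpace H]

/-- Subtracting the inner derivation by `T₀ = P₁ Φ(P₁) P₂ − P₂ Φ(P₁) P₁` from a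
nonlinear derivation `Φ` yields a nonlinear derivation vanishing at `P₁` and `P₂`. -/
theorem derivation_normalization (M : VonNeumannAlgebra H)
    (P₁ : H →L[ℂ] H) (hproj : VNProjection M P₁)
    (hnt : P₁ ≠ 0 ∧ P₁ ≠ 1) (hcf : VNCoreFree M P₁)
    (hcc : VNCentralCarrier M P₁ 1)
    (Φ : (H →L[ℂ] H) → (H →L[ℂ] H))
    (hmaps : ∀ T ∈ M, Φ T ∈ M)
    (hder : ∀ A ∈ M, ∀ B ∈ M, Φ (A * B) = Φ A * B + A * Φ B)
    (T₀ : H →L[ℂ] H)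
    (hT₀ : T₀ = P₁ * Φ P₁ * (1 - P₁) - (1 - P₁) * Φ P₁ * P₁)
    (Ψ : (H →L[ℂ] H) → (H →L[ℂ] H))
    (hΨ : ∀ T, Ψ T = Φ T - (T * T₀ - T₀ * T)) :
    (∀ T ∈ M, Ψ T ∈ M) ∧
      (∀ A ∈ M, ∀ B ∈ M, Ψ (A * B) = Ψ A * B + A * Ψ B) ∧
      Ψ P₁ = 0 ∧ Ψ (1 - P₁) = 0 := by
  obtain ⟨hP₁M, _, hidem⟩ := hproj
  have h1M : (1 : H →L[ℂ] H) ∈ M := one_mem M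
  have hP₂M : (1 - P₁) ∈ M := sub_mem h1M hP₁M
  -- opaque names for Φ P₁ and Φ (1 - P₁)
  obtain ⟨E, hE⟩ : ∃ E, Φ P₁ = E := ⟨_, rfl⟩
  obtain ⟨F, hF⟩ : ∃ F, Φ (1 - P₁) = F := ⟨_, rfl⟩
  rw [hE] at hT₀
  have hEM : E ∈ M := hE ▸ hmaps _ hP₁M
  have hT₀M : T₀ ∈ M := by
    rw [hT₀]
    exact sub_mem (mul_mem (mul_mem hP₁M hEM) hP₂M) (mul_mem (mul_mem hP₂M hEM) hP₁M)
  -- basic projection algebra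
  have h12 : P₁ * (1 - P₁) = 0 := by rw [mul_sub, mul_one, hidem, sub_self]
  have h21 : (1 - P₁) * P₁ = 0 := by rw [sub_mul, one_mul, hidem, sub_self]
  have h2idem : (1 - P₁) * (1 - P₁) = 1 - P₁ := by rw [mul_sub, mul_one, h21, sub_zero]
  -- Leibniz identities
  have hE_eq : E = E * P₁ + P₁ * E := by
    have := hder P₁ hP₁M P₁ hP₁M; rw [hidem, hE] at this; exact this
  have h11 : P₁ * E * P₁ = 0 := by
    have h := congrArg (fun X => P₁ * X * P₁) hE_eq
    simp only [mul_add, add_mul, ← mul_assoc] at h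
    rw [hidem] at h
    rw [mul_assoc (P₁ * E) P₁ P₁, hidem] at h
    exact (left_eq_add.mp h)
  have hΦ0 : Φ 0 = 0 := by
    have := hder 0 (zero_mem M) 0 (zero_mem M)
    simpa using this
  have hF_eq : F = F * (1 - P₁) + (1 - P₁) * F := by
    have := hder (1 - P₁) hP₂M (1 - P₁) hP₂M; rw [h2idem, hF] at this; exact this
  have hP₁F : P₁ * F = -(E * (1 - P₁)) := by
    have h := hder P₁ hP₁M (1 - P₁) hP₂M
    rw [h12, hΦ0, hE, hF] at h
    exact eq_neg_of_add_eq_zero_right h.symm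
  have hFP₁ : F * P₁ = -((1 - P₁) * E) := by
    have h := hder (1 - P₁) hP₂M P₁ hP₁M
    rw [h21, hΦ0, hE, hF] at h
    exact (eq_neg_of_add_eq_zero_left h.symm)
  have hP₂F : (1 - P₁) * F = -((1 - P₁) * E) := by
    have h := hF_eq
    rw [mul_sub, mul_one, hFP₁] at h
    -- h : F = F - -((1-P₁)*E) + (1-P₁)*F
    have h2 : (1 - P₁) * F + (1 - P₁) * E = 0 := by
      have := sub_eq_zero_of_eq h
      calc (1 - P₁) * F + (1 - P₁) * E
          = -(F - (F - -((1 - P₁) * E) + (1 - P₁) * F)) := by noncomm_ring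
        _ = 0 := by rw [this, neg_zero]
    exact eq_neg_of_add_eq_zero_left h2
  have hFE : F = -E := by
    have hsplit : F = P₁ * F + (1 - P₁) * F := by noncomm_ring
    rw [hP₁F, hP₂F] at hsplit
    calc F = -(E * (1 - P₁)) + -((1 - P₁) * E) := hsplit
      _ = E * P₁ + P₁ * E - E - E := by noncomm_ring
      _ = -E := by rw [← hE_eq]; noncomm_ring
  -- key commutator computation at P₁
  have hcommP₁ : P₁ * T₀ - T₀ * P₁ = E := by
    rw [hT₀]
    have expand : P₁ * (P₁ * E * (1 - P₁) - (1 - P₁) * E * P₁) -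
        (P₁ * E * (1 - P₁) - (1 - P₁) * E * P₁) * P₁
        = (P₁ * P₁) * E * (1 - P₁) - (P₁ * (1 - P₁)) * E * P₁
          - P₁ * E * ((1 - P₁) * P₁) + (1 - P₁) * E * (P₁ * P₁) := by
      noncomm_ring
    rw [expand, hidem, h12, h21]
    calc P₁ * E * (1 - P₁) - 0 * E * P₁ - P₁ * E * 0 + (1 - P₁) * E * P₁
        = (E * P₁ + P₁ * E) - (P₁ * E * P₁ + P₁ * E * P₁) := by noncomm_ring
      _ = E := by rw [← hE_eq, h11]; noncomm_ring
  have hΨP₁ : Ψ P₁ = 0 := by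
    rw [hΨ, hcommP₁, hE, sub_self]
  refine ⟨?_, ?_, hΨP₁, ?_⟩
  · intro T hT
    rw [hΨ]
    exact sub_mem (hmaps T hT) (sub_mem (mul_mem hT hT₀M) (mul_mem hT₀M hT))
  · intro A hA B hB
    rw [hΨ, hΨ, hΨ, hder A hA B hB]
    noncomm_ring
  · have hcommP₂ : (1 - P₁) * T₀ - T₀ * (1 - P₁) = -E := by
      have h : (1 - P₁) * T₀ - T₀ * (1 - P₁) = -(P₁ * T₀ - T₀ * P₁) := by noncomm_ring
      rw [h, hcommP₁]
    rw [hΨ, hcommP₂, hF, hFE]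
    noncomm_ring
end

section
/- Let M be a von Neumann algebra, P₁ ∈ M a nontrivial core-free projection with central carrier I, P₂ = I − P₁, and M_{ij} = P_i M P_j for i, j ∈ {1,2}. If Φ : M → M is a nonlinear derivation with Φ(P₁) = Φ(P₂) = 0, then Φ is additive on each corner: for all i, j ∈ {1,2} and all T, S ∈ M_{ij}, Φ(T + S) = Φ(T) + Φ(S). -/
variable {H : Type*} [NormedAddCommGroup H] [InnerProductSpace ℂ H] [CompleteSpace H]

/-- Key operator-theoretic lemma: if `D * (R * Qp) = 0` for all `R ∈ M`, then there is a
central projection `Z` of `M` with `Z * Qp = Qp` and `D * Z = 0`. -/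
lemma exists_central_kill (M : VonNeumannAlgebra H) (Qp : H →L[ℂ] H) (hQp : Qp ∈ M)
    (D : H →L[ℂ] H) (hD : ∀ R ∈ M, D * (R * Qp) = 0) :
    ∃ Z, VNCentralProjection M Z ∧ Z * Qp = Qp ∧ D * Z = 0 := by
  classical
  set gens : Set H := {y | ∃ R ∈ M, ∃ x : H, R (Qp x) = y} with hgens
  set K₀ : Submodule ℂ H := Submodule.span ℂ gens with hK₀
  set K : Submodule ℂ H := K₀.topologicalClosure with hK
  have hKclosed : IsClosed (K : Set H) := K₀.isClosed_topologicalClosure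
  haveI : CompleteSpace K := hKclosed.completeSpace_coe
  set Z : H →L[ℂ] H := K.subtypeL ∘L K.orthogonalProjectionOnto with hZ
  have hZmemK : ∀ x, Z x ∈ K := fun x => (K.orthogonalProjectionOnto x).2
  have hZfix : ∀ y ∈ K, Z y = y := fun y hy => K.starProjection_eq_self_iff.2 hy
  have hZsa : IsSelfAdjoint Z := isSelfAdjoint_starProjection K
  -- invariance criterion
  have hinv : ∀ (A : H →L[ℂ] H), (∀ R ∈ M, ∀ x : H, A (R (Qp x)) ∈ K₀) →
      ∀ y ∈ K, A y ∈ K := by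
    intro A hA y hy
    have hcomap : K ≤ K.comap (A : H →ₗ[ℂ] H) := by
      apply Submodule.topologicalClosure_minimal
      · rw [hK₀]
        apply Submodule.span_le.2
        rintro y ⟨R, hR, x, rfl⟩
        exact K₀.le_topologicalClosure (hA R hR x)
      · exact hKclosed.preimage A.continuous
    exact hcomap hy
  -- commuting criterion
  have hcomm : ∀ (A : H →L[ℂ] H), (∀ y ∈ K, A y ∈ K) → (∀ y ∈ K, (star A) y ∈ K) →
      Z * A = A * Z := by
    intro A h1 h2
    have e1 : Z * A * Z = A * Z := by
      ext x
      exact hZfix _ (h1 _ (hZmemK x))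
    have e2 : Z * star A * Z = star A * Z := by
      ext x
      exact hZfix _ (h2 _ (hZmemK x))
    have e3 := congrArg star e2
    simp only [star_mul, hZsa.star_eq, star_star, ← mul_assoc] at e3
    rw [← e3, e1]
  -- K is invariant under M and under the commutant of M
  have hMinv : ∀ A ∈ M, ∀ y ∈ K, A y ∈ K := by
    intro A hA
    apply hinv
    intro R hR x
    have : A (R (Qp x)) = (A * R) (Qp x) := rfl
    rw [this]
    exact Submodule.subset_span ⟨A * R, mul_mem hA hR, x, rfl⟩
  have hM'inv : ∀ A ∈ Set.centralizer (M : Set (H →L[ℂ] H)), ∀ y ∈ K, A y ∈ K := by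
    intro A hA
    apply hinv
    intro R hR x
    have h1 : (R * Qp) * A = A * (R * Qp) := hA (R * Qp) (mul_mem hR hQp)
    have : A (R (Qp x)) = (A * (R * Qp)) x := rfl
    rw [this, ← h1]
    exact Submodule.subset_span ⟨R, hR, A x, rfl⟩
  -- star-closure of the commutant
  have hM'star : ∀ A ∈ Set.centralizer (M : Set (H →L[ℂ] H)),
      star A ∈ Set.centralizer (M : Set (H →L[ℂ] H)) := by
    intro A hA m hm
    have := congrArg star (hA (star m) (star_mem hm))
    simpa [star_mul] using this.symm
  -- Z is in M
  have hZM : Z ∈ M := by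
    have : Z ∈ Set.centralizer (Set.centralizer (M : Set (H →L[ℂ] H))) := by
      intro A hA
      exact (hcomm A (hM'inv A hA) (hM'inv _ (hM'star A hA))).symm
    rwa [M.centralizer_centralizer] at this
  have hZcomm : ∀ T ∈ M, Z * T = T * Z := by
    intro T hT
    exact hcomm T (hMinv T hT) (hMinv _ (star_mem hT))
  have hZidem : Z * Z = Z := by
    ext x
    exact hZfix _ (hZmemK x)
  have hZQp : Z * Qp = Qp := by
    ext x
    have : Qp x ∈ K := K₀.le_topologicalClosure
      (Submodule.subset_span ⟨1, one_mem M, x, by simp⟩)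
    exact hZfix _ this
  have hDZ : D * Z = 0 := by
    have hker : K ≤ LinearMap.ker (D : H →ₗ[ℂ] H) := by
      apply Submodule.topologicalClosure_minimal
      · apply Submodule.span_le.2
        rintro y ⟨R, hR, x, rfl⟩
        have : D (R (Qp x)) = (D * (R * Qp)) x := rfl
        simp only [SetLike.mem_coe, LinearMap.mem_ker, ContinuousLinearMap.coe_coe]
        rw [this, hD R hR]
        rfl
      · exact ContinuousLinearMap.isClosed_ker D
    ext x
    have := hker (hZmemK x)
    simpa using this
  exact ⟨Z, ⟨⟨hZM, hZsa, hZidem⟩, hZcomm⟩, hZQp, hDZ⟩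

/-- Additivity of a derivation on an off-diagonal corner `P M Q`. -/
lemma offdiag_additive (M : VonNeumannAlgebra H) (P Q : H →L[ℂ] H)
    (hP : P ∈ M) (hQ : Q ∈ M) (hPP : P * P = P) (hQQ : Q * Q = Q)
    (hPQ : P * Q = 0) (hQP : Q * P = 0)
    (Φ : (H →L[ℂ] H) → (H →L[ℂ] H))
    (hder : ∀ A ∈ M, ∀ B ∈ M, Φ (A * B) = Φ A * B + A * Φ B)
    (hΦP : Φ P = 0) (hΦQ : Φ Q = 0) :
    ∀ T ∈ M, P * T * Q = T → ∀ S ∈ M, P * S * Q = S → Φ (T + S) = Φ T + Φ S := by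
  intro T hT hTT S hS hSS
  have hPT : P * T = T := by
    rw [← hTT]; simp only [← mul_assoc]; rw [hPP]
  have hTQ : T * Q = T := by
    rw [← hTT, mul_assoc, hQQ]
  have hPS : P * S = S := by
    rw [← hSS]; simp only [← mul_assoc]; rw [hPP]
  have hSQ : S * Q = S := by
    rw [← hSS, mul_assoc, hQQ]
  have hTP : T * P = 0 := by
    rw [← hTQ, mul_assoc, hQP, mul_zero]
  have hQS : Q * S = 0 := by
    rw [← hPS, ← mul_assoc, hQP, zero_mul]
  have hTS : T * S = 0 := by
    rw [← hPS, ← mul_assoc, hTP, zero_mul]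
  have hPTmem : P + T ∈ M := add_mem hP hT
  have hSQmem : S + Q ∈ M := add_mem hS hQ
  have key : (P + T) * (S + Q) = T + S := by
    rw [add_mul, mul_add, mul_add, hPS, hPQ, hTS, hTQ]
    abel
  have hA : Φ (P + T) * P = 0 := by
    have h1 : (P + T) * P = P := by rw [add_mul, hPP, hTP, add_zero]
    have := hder (P + T) hPTmem P hP
    rw [h1, hΦP, mul_zero, add_zero] at this
    exact this.symm
  have hB : Φ (P + T) * Q = Φ T := by
    have h1 : (P + T) * Q = T := by rw [add_mul, hPQ, hTQ, zero_add]
    have := hder (P + T) hPTmem Q hQ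
    rw [h1, hΦQ, mul_zero, add_zero] at this
    exact this.symm
  have hC : Q * Φ (S + Q) = 0 := by
    have h1 : Q * (S + Q) = Q := by rw [mul_add, hQS, hQQ, zero_add]
    have := hder Q hQ (S + Q) hSQmem
    rw [h1, hΦQ, zero_mul, zero_add] at this
    exact this.symm
  have hD : P * Φ (S + Q) = Φ S := by
    have h1 : P * (S + Q) = S := by rw [mul_add, hPS, hPQ, add_zero]
    have := hder P hP (S + Q) hSQmem
    rw [h1, hΦP, zero_mul, zero_add] at this
    exact this.symm
  have e1 : Φ (P + T) * S = 0 := by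
    rw [← hPS, ← mul_assoc, hA, zero_mul]
  have e2 : T * Φ (S + Q) = 0 := by
    rw [← hTQ, mul_assoc, hC, mul_zero]
  calc Φ (T + S) = Φ ((P + T) * (S + Q)) := by rw [key]
    _ = Φ (P + T) * (S + Q) + (P + T) * Φ (S + Q) := hder _ hPTmem _ hSQmem
    _ = (Φ (P + T) * S + Φ (P + T) * Q) + (P * Φ (S + Q) + T * Φ (S + Q)) := by
        rw [mul_add, add_mul]
    _ = (0 + Φ T) + (Φ S + 0) := by rw [e1, e2, hB, hD]
    _ = Φ T + Φ S := by abel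

/-- A derivation maps the corner `Pi M Pj` into itself. -/
lemma corner_loc (M : VonNeumannAlgebra H) (Pi Pj : H →L[ℂ] H)
    (hPi : Pi ∈ M) (hPj : Pj ∈ M)
    (Φ : (H →L[ℂ] H) → (H →L[ℂ] H))
    (hder : ∀ A ∈ M, ∀ B ∈ M, Φ (A * B) = Φ A * B + A * Φ B)
    (hΦPi : Φ Pi = 0) (hΦPj : Φ Pj = 0) :
    ∀ T ∈ M, Pi * T * Pj = T → Φ T = Pi * Φ T * Pj := by
  intro T hT hTT
  have h1 : Φ (T * Pj) = Φ T * Pj := by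
    rw [hder T hT Pj hPj, hΦPj, mul_zero, add_zero]
  have h2 : Φ (Pi * (T * Pj)) = Pi * Φ (T * Pj) := by
    rw [hder Pi hPi (T * Pj) (mul_mem hT hPj), hΦPi, zero_mul, zero_add]
  have h3 : Pi * (T * Pj) = T := by rw [← mul_assoc]; exact hTT
  calc Φ T = Φ (Pi * (T * Pj)) := by rw [h3]
    _ = Pi * (Φ T * Pj) := by rw [h2, h1]
    _ = Pi * Φ T * Pj := by rw [mul_assoc]

/-- Additivity of a derivation on a diagonal corner `P M P`. -/
lemma diag_additive (M : VonNeumannAlgebra H) (P Qo : H →L[ℂ] H)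
    (hP : P ∈ M) (hQo : Qo ∈ M) (hPP : P * P = P) (hQQ : Qo * Qo = Qo)
    (hPQ : P * Qo = 0) (hQP : Qo * P = 0)
    (Φ : (H →L[ℂ] H) → (H →L[ℂ] H))
    (hmaps : ∀ T ∈ M, Φ T ∈ M)
    (hder : ∀ A ∈ M, ∀ B ∈ M, Φ (A * B) = Φ A * B + A * Φ B)
    (hΦP : Φ P = 0) (hΦQo : Φ Qo = 0)
    (hZone : ∀ Z, VNCentralProjection M Z → Z * Qo = Qo → Z = 1) :
    ∀ T ∈ M, P * T * P = T → ∀ S ∈ M, P * S * P = S → Φ (T + S) = Φ T + Φ S := by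
  intro T hT hTT S hS hSS
  have hPT : P * T = T := by rw [← hTT]; simp only [← mul_assoc]; rw [hPP]
  have hTP : T * P = T := by rw [← hTT, mul_assoc, hPP]
  have hPS : P * S = S := by rw [← hSS]; simp only [← mul_assoc]; rw [hPP]
  have hSP : S * P = S := by rw [← hSS, mul_assoc, hPP]
  have hTSmem : T + S ∈ M := add_mem hT hS
  have hTSc : P * (T + S) * P = T + S := by
    rw [mul_add, add_mul, hPT, hPS, hTP, hSP]
  set D : H →L[ℂ] H := Φ (T + S) - Φ T - Φ S with hDdef
  have key : ∀ X : H →L[ℂ] H, (P * X * P) * P = P * X * P := fun X => by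
    rw [mul_assoc (P * X) P P, hPP]
  have hlocTS : Φ (T + S) = P * Φ (T + S) * P :=
    corner_loc M P P hP hP Φ hder hΦP hΦP (T + S) hTSmem hTSc
  have hlocT : Φ T = P * Φ T * P := corner_loc M P P hP hP Φ hder hΦP hΦP T hT hTT
  have hlocS : Φ S = P * Φ S * P := corner_loc M P P hP hP Φ hder hΦP hΦP S hS hSS
  have hDP : D * P = D := by
    have e1 : Φ (T + S) * P = Φ (T + S) := by
      nth_rewrite 1 [hlocTS]; rw [key]; exact hlocTS.symm
    have e2 : Φ T * P = Φ T := by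
      nth_rewrite 1 [hlocT]; rw [key]; exact hlocT.symm
    have e3 : Φ S * P = Φ S := by
      nth_rewrite 1 [hlocS]; rw [key]; exact hlocS.symm
    rw [hDdef, sub_mul, sub_mul, e1, e2, e3]
  have hDmul : ∀ R ∈ M, D * (R * Qo) = 0 := by
    intro R hR
    set X : H →L[ℂ] H := P * R * Qo with hXdef
    have hXmem : X ∈ M := mul_mem (mul_mem hP hR) hQo
    have hPX : P * X = X := by rw [hXdef]; simp only [← mul_assoc]; rw [hPP]
    have hXQ : X * Qo = X := by rw [hXdef, mul_assoc (P * R) Qo Qo, hQQ]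
    have hTX : P * (T * X) * Qo = T * X := by
      rw [← mul_assoc P T X, hPT, mul_assoc, hXQ]
    have hSX : P * (S * X) * Qo = S * X := by
      rw [← mul_assoc P S X, hPS, mul_assoc, hXQ]
    have hTXmem : T * X ∈ M := mul_mem hT hXmem
    have hSXmem : S * X ∈ M := mul_mem hS hXmem
    have hadd : Φ (T * X + S * X) = Φ (T * X) + Φ (S * X) :=
      offdiag_additive M P Qo hP hQo hPP hQQ hPQ hQP Φ hder hΦP hΦQo
        (T * X) hTXmem hTX (S * X) hSXmem hSX
    have eq1 : Φ (T + S) * X + (T + S) * Φ X = Φ (T * X) + Φ (S * X) := by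
      rw [← hadd, ← add_mul]
      exact (hder (T + S) hTSmem X hXmem).symm
    have eq2 : Φ (T * X) = Φ T * X + T * Φ X := hder T hT X hXmem
    have eq3 : Φ (S * X) = Φ S * X + S * Φ X := hder S hS X hXmem
    have e : Φ (T + S) * X = Φ T * X + Φ S * X := by
      have h := eq1
      rw [eq2, eq3, add_mul T S (Φ X)] at h
      calc Φ (T + S) * X
          = Φ (T + S) * X + (T * Φ X + S * Φ X) - (T * Φ X + S * Φ X) := by abel
        _ = (Φ T * X + T * Φ X + (Φ S * X + S * Φ X)) - (T * Φ X + S * Φ X) := by rw [h]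
        _ = Φ T * X + Φ S * X := by abel
    have hDX : D * X = 0 := by
      rw [hDdef, sub_mul, sub_mul, e]
      abel
    calc D * (R * Qo) = (D * P) * (R * Qo) := by rw [hDP]
      _ = D * X := by rw [hXdef, mul_assoc, mul_assoc]
      _ = 0 := hDX
  have hDmem : D ∈ M := sub_mem (sub_mem (hmaps _ hTSmem) (hmaps _ hT)) (hmaps _ hS)
  obtain ⟨Z, hZc, hZQo, hDZ⟩ := exists_central_kill M Qo hQo D hDmul
  have hZ1 : Z = 1 := hZone Z hZc hZQo
  have hD0 : D = 0 := by rw [← mul_one D, ← hZ1]; exact hDZ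
  have : Φ (T + S) - Φ T - Φ S = 0 := hD0
  calc Φ (T + S) = (Φ (T + S) - Φ T - Φ S) + Φ T + Φ S := by abel
    _ = Φ T + Φ S := by rw [this]; abel

/-- For a nonlinear derivation `Φ` with `Φ P₁ = Φ P₂ = 0`, `Φ` is additive on each
Peirce corner `M_{ij} = P_i M P_j`. -/
theorem derivation_additive_on_corners (M : VonNeumannAlgebra H)
    (P₁ : H →L[ℂ] H) (hproj : VNProjection M P₁)
    (hnt : P₁ ≠ 0 ∧ P₁ ≠ 1) (hcf : VNCoreFree M P₁)
    (hcc : VNCentralCarrier M P₁ 1)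
    (Φ : (H →L[ℂ] H) → (H →L[ℂ] H))
    (hmaps : ∀ T ∈ M, Φ T ∈ M)
    (hder : ∀ A ∈ M, ∀ B ∈ M, Φ (A * B) = Φ A * B + A * Φ B)
    (hP1 : Φ P₁ = 0) (hP2 : Φ (1 - P₁) = 0) :
    ∀ Pi ∈ ({P₁, 1 - P₁} : Set (H →L[ℂ] H)),
      ∀ Pj ∈ ({P₁, 1 - P₁} : Set (H →L[ℂ] H)),
        ∀ T ∈ M, Pi * T * Pj = T → ∀ S ∈ M, Pi * S * Pj = S →
          Φ (T + S) = Φ T + Φ S := by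
  have hPmem := hproj.1
  have hPP := hproj.2.2
  have hQmem : (1 : H →L[ℂ] H) - P₁ ∈ M := sub_mem (one_mem M) hPmem
  have hPQ : P₁ * (1 - P₁) = 0 := by rw [mul_sub, mul_one, hPP, sub_self]
  have hQP : (1 - P₁) * P₁ = 0 := by rw [sub_mul, one_mul, hPP, sub_self]
  have hQQ : (1 - P₁) * (1 - P₁) = 1 - P₁ := by
    rw [sub_mul, one_mul, mul_sub, mul_one, hPP]; abel
  have hZoneQ : ∀ Z, VNCentralProjection M Z → Z * (1 - P₁) = 1 - P₁ → Z = 1 := by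
    intro Z hZc hZq
    have hZmem := hZc.1.1
    have h1z : VNCentralProjection M (1 - Z) := by
      refine ⟨⟨sub_mem (one_mem M) hZmem, ?_, ?_⟩, ?_⟩
      · exact (IsSelfAdjoint.one _).sub hZc.1.2.1
      · rw [sub_mul, one_mul, mul_sub, mul_one, hZc.1.2.2]; abel
      · intro T' hT'
        rw [sub_mul, one_mul, mul_sub, mul_one, hZc.2 T' hT']
    have hZq' : Z - Z * P₁ = 1 - P₁ := by rw [mul_sub, mul_one] at hZq; exact hZq
    have h2 : (1 - Z) * P₁ = 1 - Z := by
      rw [sub_mul, one_mul]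
      calc P₁ - Z * P₁ = (Z - Z * P₁) - Z + P₁ := by abel
        _ = (1 - P₁) - Z + P₁ := by rw [hZq']
        _ = 1 - Z := by abel
    have h3 := hcf (1 - Z) h1z h2
    have h4 : (1 : H →L[ℂ] H) = Z := sub_eq_zero.mp h3
    exact h4.symm
  have hZoneP : ∀ Z, VNCentralProjection M Z → Z * P₁ = P₁ → Z = 1 := by
    intro Z hZc hZq
    have := hcc.2.2 Z hZc hZq
    rwa [one_mul] at this
  intro Pi hPi Pj hPj
  simp only [Set.mem_insert_iff, Set.mem_singleton_iff] at hPi hPj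
  rcases hPi with h1 | h1 <;> rcases hPj with h2 | h2 <;> rw [h1, h2] <;>
    intro T hT hTT S hS hSS
  · exact diag_additive M P₁ (1 - P₁) hPmem hQmem hPP hQQ hPQ hQP Φ hmaps hder hP1 hP2
      hZoneQ T hT hTT S hS hSS
  · exact offdiag_additive M P₁ (1 - P₁) hPmem hQmem hPP hQQ hPQ hQP Φ hder hP1 hP2
      T hT hTT S hS hSS
  · exact offdiag_additive M (1 - P₁) P₁ hQmem hPmem hQQ hPP hQP hPQ Φ hder hP2 hP1
      T hT hTT S hS hSS
  · exact diag_additive M (1 - P₁) P₁ hQmem hPmem hQQ hPP hQP hPQ Φ hmaps hder hP2 hP1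
      hZoneP T hT hTT S hS hSS
end

section
/- Let M be a von Neumann algebra, P₁ ∈ M a nontrivial core-free projection with central carrier I, P₂ = I − P₁, and M_{ij} = P_i M P_j for i, j ∈ {1,2}. If Φ : M → M is a nonlinear derivation with Φ(P₁) = Φ(P₂) = 0, then for all T₁₁ ∈ M₁₁, T₁₂ ∈ M₁₂, T₂₁ ∈ M₂₁, T₂₂ ∈ M₂₂ one has Φ(T₁₁ + T₁₂ + T₂₁ + T₂₂) = Φ(T₁₁) + Φ(T₁₂) + Φ(T₂₁) + Φ(T₂₂). -/
variable {H : Type*} [NormedAddCommGroup H] [InnerProductSpace ℂ H] [CompleteSpace H]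

/-- For a nonlinear derivation `Φ` with `Φ P₁ = Φ P₂ = 0`, `Φ` is additive across
the Peirce decomposition. -/
theorem derivation_additive_on_peirce_sum (M : VonNeumannAlgebra H)
    (P₁ : H →L[ℂ] H) (hproj : VNProjection M P₁)
    (hnt : P₁ ≠ 0 ∧ P₁ ≠ 1) (hcf : VNCoreFree M P₁)
    (hcc : VNCentralCarrier M P₁ 1)
    (Φ : (H →L[ℂ] H) → (H →L[ℂ] H))
    (hmaps : ∀ T ∈ M, Φ T ∈ M)
    (hder : ∀ A ∈ M, ∀ B ∈ M, Φ (A * B) = Φ A * B + A * Φ B)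
    (hP1 : Φ P₁ = 0) (hP2 : Φ (1 - P₁) = 0) :
    ∀ T₁₁ ∈ M, P₁ * T₁₁ * P₁ = T₁₁ →
      ∀ T₁₂ ∈ M, P₁ * T₁₂ * (1 - P₁) = T₁₂ →
        ∀ T₂₁ ∈ M, (1 - P₁) * T₂₁ * P₁ = T₂₁ →
          ∀ T₂₂ ∈ M, (1 - P₁) * T₂₂ * (1 - P₁) = T₂₂ →
            Φ (T₁₁ + T₁₂ + T₂₁ + T₂₂) = Φ T₁₁ + Φ T₁₂ + Φ T₂₁ + Φ T₂₂ := by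
  intro T₁₁ h11m h11 T₁₂ h12m h12 T₂₁ h21m h21 T₂₂ h22m h22
  obtain ⟨hP1m, -, hpp⟩ := hproj
  set Q : H →L[ℂ] H := 1 - P₁ with hQdef
  have hQm : Q ∈ M := sub_mem (one_mem M) hP1m
  have hpq0 : P₁ * Q = 0 := by rw [hQdef, mul_sub, mul_one, hpp, sub_self]
  have hqp0 : Q * P₁ = 0 := by rw [hQdef, sub_mul, one_mul, hpp, sub_self]
  have hqq : Q * Q = Q := by rw [hQdef, mul_sub, mul_one, sub_mul, one_mul, hpp, sub_self, sub_zero]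
  have hpp' : ∀ x : H →L[ℂ] H, P₁ * (P₁ * x) = P₁ * x := fun x => by rw [← mul_assoc, hpp]
  have hqq' : ∀ x : H →L[ℂ] H, Q * (Q * x) = Q * x := fun x => by rw [← mul_assoc, hqq]
  have hpq' : ∀ x : H →L[ℂ] H, P₁ * (Q * x) = 0 := fun x => by rw [← mul_assoc, hpq0, zero_mul]
  have hqp' : ∀ x : H →L[ℂ] H, Q * (P₁ * x) = 0 := fun x => by rw [← mul_assoc, hqp0, zero_mul]
  set T : H →L[ℂ] H := T₁₁ + T₁₂ + T₂₁ + T₂₂ with hTdef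
  have hTm : T ∈ M := add_mem (add_mem (add_mem h11m h12m) h21m) h22m
  have e11 : P₁ * T * P₁ = T₁₁ := by
    rw [hTdef, ← h11, ← h12, ← h21, ← h22]
    simp [mul_add, add_mul, mul_assoc, hpp', hqq', hpq', hqp', hpp, hqq, hpq0, hqp0]
  have e12 : P₁ * T * Q = T₁₂ := by
    rw [hTdef, ← h11, ← h12, ← h21, ← h22]
    simp [mul_add, add_mul, mul_assoc, hpp', hqq', hpq', hqp', hpp, hqq, hpq0, hqp0]
  have e21 : Q * T * P₁ = T₂₁ := by
    rw [hTdef, ← h11, ← h12, ← h21, ← h22]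
    simp [mul_add, add_mul, mul_assoc, hpp', hqq', hpq', hqp', hpp, hqq, hpq0, hqp0]
  have e22 : Q * T * Q = T₂₂ := by
    rw [hTdef, ← h11, ← h12, ← h21, ← h22]
    simp [mul_add, add_mul, mul_assoc, hpp', hqq', hpq', hqp', hpp, hqq, hpq0, hqp0]
  have hΦP : ∀ A ∈ M, Φ (P₁ * A) = P₁ * Φ A := fun A hA => by
    rw [hder P₁ hP1m A hA, hP1, zero_mul, zero_add]
  have hΦQ : ∀ A ∈ M, Φ (Q * A) = Q * Φ A := fun A hA => by
    rw [hder Q hQm A hA, hQdef, hP2, zero_mul, zero_add]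
  have hΦAP : ∀ A ∈ M, Φ (A * P₁) = Φ A * P₁ := fun A hA => by
    rw [hder A hA P₁ hP1m, hP1, mul_zero, add_zero]
  have hΦAQ : ∀ A ∈ M, Φ (A * Q) = Φ A * Q := fun A hA => by
    rw [hder A hA Q hQm, hQdef, hP2, mul_zero, add_zero]
  have f11 : Φ T₁₁ = P₁ * Φ T * P₁ := by
    rw [← e11, mul_assoc, hΦP _ (mul_mem hTm hP1m), hΦAP _ hTm, mul_assoc]
  have f12 : Φ T₁₂ = P₁ * Φ T * Q := by
    rw [← e12, mul_assoc, hΦP _ (mul_mem hTm hQm), hΦAQ _ hTm, mul_assoc]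
  have f21 : Φ T₂₁ = Q * Φ T * P₁ := by
    rw [← e21, mul_assoc, hΦQ _ (mul_mem hTm hP1m), hΦAP _ hTm, mul_assoc]
  have f22 : Φ T₂₂ = Q * Φ T * Q := by
    rw [← e22, mul_assoc, hΦQ _ (mul_mem hTm hQm), hΦAQ _ hTm, mul_assoc]
  rw [f11, f12, f21, f22, hQdef]
  noncomm_ring
end

section
/- Let M be a von Neumann algebra, P₁ ∈ M a nontrivial core-free projection with central carrier I, and P₂ = I − P₁. Let ξ be a complex scalar with ξ ≠ 0 and ξ ≠ 1, and let Φ : M → M be a nonlinear ξ-Lie derivation. Then Φ(0) = 0, and there exists T₀ ∈ M such that Φ(P_i) = P_iT₀ − T₀P_i for i = 1, 2. -/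
variable {H : Type*} [NormedAddCommGroup H] [InnerProductSpace ℂ H] [CompleteSpace H]

-- auxiliary: invariance of topological closure
lemma aux_invariant_closure (K₀ : Submodule ℂ H) (T : H →L[ℂ] H)
    (h : ∀ v ∈ K₀, T v ∈ K₀) :
    ∀ v ∈ K₀.topologicalClosure, T v ∈ K₀.topologicalClosure := by
  intro v hv
  have hmap : Set.MapsTo T (K₀ : Set H) (K₀ : Set H) := h
  have h2 := hmap.closure T.continuous
  have hv' : v ∈ closure (K₀ : Set H) := by
    rwa [← Submodule.topologicalClosure_coe]
  have := h2 hv'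
  rwa [← Submodule.topologicalClosure_coe] at this

-- auxiliary: commutation with an orthogonal-projection-like operator
lemma aux_commute (K : Submodule ℂ H) (E T : H →L[ℂ] H)
    (hEsa : IsSelfAdjoint E) (hErange : ∀ h : H, E h ∈ K) (hEfix : ∀ v ∈ K, E v = v)
    (hT : ∀ v ∈ K, T v ∈ K) (hTstar : ∀ v ∈ K, (star T) v ∈ K) :
    T * E = E * T := by
  have h1 : E * (T * E) = T * E := by
    ext h
    exact hEfix _ (hT _ (hErange h))
  have h2 : E * (star T * E) = star T * E := by
    ext h
    exact hEfix _ (hTstar _ (hErange h))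
  have h3 := congrArg star h2
  simp only [star_mul, hEsa.star_eq, star_star, ← mul_assoc] at h3
  -- h3 : E * T * E = E * T
  calc T * E = E * (T * E) := h1.symm
    _ = E * T * E := by rw [mul_assoc]
    _ = E * T := h3

/-- The range-carrier lemma: given `P ∈ M`, there is a central projection `E`
of `M` with `E * P = P` such that any `D` killing every `X * P` kills `E`. -/
lemma aux_carrier (M : VonNeumannAlgebra H) (P : H →L[ℂ] H) (hP : P ∈ M)
    (D : H →L[ℂ] H) (hD : ∀ X ∈ M, D * (X * P) = 0) :
    ∃ E : H →L[ℂ] H, VNCentralProjection M E ∧ E * P = P ∧ D * E = 0 := by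
  classical
  set Sgen : Set H := {y | ∃ X ∈ M, ∃ h : H, X (P h) = y} with hSgen
  set K₀ : Submodule ℂ H := Submodule.span ℂ Sgen with hK₀
  set K : Submodule ℂ H := K₀.topologicalClosure with hK
  have hKclosed : IsClosed (K : Set H) := K₀.isClosed_topologicalClosure
  haveI : CompleteSpace K := hKclosed.completeSpace_coe
  set E : H →L[ℂ] H := K.subtypeL ∘L K.orthogonalProjectionOnto with hE
  have hEsa : IsSelfAdjoint E := isSelfAdjoint_starProjection K
  have hErange : ∀ h : H, E h ∈ K := fun h => (K.orthogonalProjectionOnto h).2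
  have hEfix : ∀ v ∈ K, E v = v := fun v hv => Submodule.starProjection_eq_self_iff.mpr hv
  -- invariance from generator-invariance
  have hinv : ∀ T : H →L[ℂ] H, (∀ y ∈ Sgen, T y ∈ K₀) → ∀ v ∈ K, T v ∈ K := by
    intro T hTgen
    refine aux_invariant_closure K₀ T ?_
    intro v hv
    have hle : K₀ ≤ K₀.comap (T : H →ₗ[ℂ] H) := by
      rw [hK₀]
      exact Submodule.span_le.mpr hTgen
    exact hle hv
  have hcomm : ∀ T : H →L[ℂ] H, (∀ y ∈ Sgen, T y ∈ K₀) → (∀ y ∈ Sgen, (star T) y ∈ K₀) →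
      T * E = E * T := by
    intro T h1 h2
    exact aux_commute K E T hEsa hErange hEfix (hinv T h1) (hinv (star T) h2)
  -- E commutes with every element of M
  have hMgen : ∀ T : H →L[ℂ] H, T ∈ M → ∀ y ∈ Sgen, T y ∈ K₀ := by
    intro T hT y hy
    obtain ⟨X, hX, h, rfl⟩ := hy
    apply Submodule.subset_span
    exact ⟨T * X, mul_mem hT hX, h, rfl⟩
  have hcommM : ∀ T ∈ M, T * E = E * T := fun T hT =>
    hcomm T (hMgen T hT) (hMgen (star T) (star_mem hT))
  -- E lies in M (commutes with the commutant)
  have hEM : E ∈ M := by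
    rw [← SetLike.mem_coe, ← M.centralizer_centralizer]
    intro c hc
    have hcM : ∀ m ∈ M, m * c = c * m := fun m hm => hc m hm
    have hcstar : ∀ m ∈ M, m * star c = star c * m := by
      intro m hm
      have := congrArg star (hcM (star m) (star_mem hm))
      simpa [star_mul] using this.symm
    have hcgen : ∀ (c' : H →L[ℂ] H), (∀ m ∈ M, m * c' = c' * m) → ∀ y ∈ Sgen, c' y ∈ K₀ := by
      intro c' hc' y hy
      obtain ⟨X, hX, h, rfl⟩ := hy
      apply Submodule.subset_span
      refine ⟨X, hX, c' h, ?_⟩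
      have h1 : c' (X (P h)) = (c' * (X * P)) h := rfl
      have h2 : c' * (X * P) = X * P * c' := by
        rw [← mul_assoc, ← hc' X hX, mul_assoc, ← hc' P hP, ← mul_assoc]
      rw [h1, h2]; rfl
    exact hcomm c (hcgen c hcM) (hcgen (star c) hcstar)
  -- E is an idempotent
  have hEidem : E * E = E := by
    ext h
    exact hEfix _ (hErange h)
  -- E * P = P
  have hEP : E * P = P := by
    ext h
    have hmem : P h ∈ K := by
      apply K₀.le_topologicalClosure
      apply Submodule.subset_span
      exact ⟨1, one_mem M, h, by simp⟩
    exact hEfix _ hmem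
  -- D * E = 0
  have hDE : D * E = 0 := by
    have hker : ∀ v ∈ K, D v = 0 := by
      have hclosed : IsClosed {x : H | D x = 0} := isClosed_eq D.continuous continuous_const
      have hsub : (K₀ : Set H) ⊆ {x : H | D x = 0} := by
        intro v hv
        have hle : K₀ ≤ LinearMap.ker (D : H →ₗ[ℂ] H) := by
          rw [hK₀]
          apply Submodule.span_le.mpr
          rintro y ⟨X, hX, h, rfl⟩
          have : D (X (P h)) = (D * (X * P)) h := rfl
          simp only [Set.mem_setOf_eq, SetLike.mem_coe, LinearMap.mem_ker]
          rw [ContinuousLinearMap.coe_coe, this, hD X hX]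
          rfl
        exact hle hv
      intro v hv
      have hv' : v ∈ closure (K₀ : Set H) := by rwa [← Submodule.topologicalClosure_coe]
      exact closure_minimal hsub hclosed hv'
    ext h
    have := hker _ (hErange h)
    simpa using this
  exact ⟨E, ⟨⟨hEM, hEsa, hEidem⟩, fun T hT => (hcommM T hT).symm⟩, hEP, hDE⟩


set_option maxHeartbeats 1000000 in
/-- **Claim 1 of Theorem 1.2.** For a nonlinear ξ-Lie derivation `Φ` (ξ ≠ 0, 1):
`Φ 0 = 0` and there is `T₀ ∈ M` with `Φ P_i = P_i T₀ − T₀ P_i` for `i = 1, 2`. -/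
theorem xiLie_derivation_at_projections (M : VonNeumannAlgebra H)
    (P₁ : H →L[ℂ] H) (hproj : VNProjection M P₁)
    (hnt : P₁ ≠ 0 ∧ P₁ ≠ 1) (hcf : VNCoreFree M P₁)
    (hcc : VNCentralCarrier M P₁ 1)
    (ξ : ℂ) (hξ0 : ξ ≠ 0) (hξ1 : ξ ≠ 1)
    (Φ : (H →L[ℂ] H) → (H →L[ℂ] H))
    (hmaps : ∀ T ∈ M, Φ T ∈ M)
    (hlie : ∀ A ∈ M, ∀ B ∈ M,
      Φ (A * B - ξ • (B * A)) =
        (Φ A * B - ξ • (B * Φ A)) + (A * Φ B - ξ • (Φ B * A))) :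
    Φ 0 = 0 ∧
      ∃ T₀ ∈ M, Φ P₁ = P₁ * T₀ - T₀ * P₁ ∧
        Φ (1 - P₁) = (1 - P₁) * T₀ - T₀ * (1 - P₁) := by
  obtain ⟨hP₁M, hP₁sa, hP₁idem⟩ := hproj
  have hξ1' : (1 : ℂ) - ξ ≠ 0 := sub_ne_zero.mpr (Ne.symm hξ1)
  set P₂ : H →L[ℂ] H := 1 - P₁ with hP₂def
  have hP₂M : P₂ ∈ M := sub_mem (one_mem M) hP₁M
  set S : H →L[ℂ] H := Φ P₁ with hSdef
  set T : H →L[ℂ] H := Φ P₂ with hTdef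
  have hSM : S ∈ M := hmaps _ hP₁M
  have hTM : T ∈ M := hmaps _ hP₂M
  have h12 : P₁ * P₂ = 0 := by rw [hP₂def, mul_sub, mul_one, hP₁idem, sub_self]
  have h21 : P₂ * P₁ = 0 := by rw [hP₂def, sub_mul, one_mul, hP₁idem, sub_self]
  have h22 : P₂ * P₂ = P₂ := by
    rw [hP₂def, mul_sub, mul_one, sub_mul, one_mul, hP₁idem, sub_self, sub_zero]
  have hsum : P₁ + P₂ = 1 := by rw [hP₂def]; abel
  have z12 : ∀ x : H →L[ℂ] H, P₁ * (P₂ * x) = 0 := fun x => by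
    rw [← mul_assoc, h12, zero_mul]
  have z21 : ∀ x : H →L[ℂ] H, P₂ * (P₁ * x) = 0 := fun x => by
    rw [← mul_assoc, h21, zero_mul]
  have i1 : ∀ x : H →L[ℂ] H, P₁ * (P₁ * x) = P₁ * x := fun x => by
    rw [← mul_assoc, hP₁idem]
  have i2 : ∀ x : H →L[ℂ] H, P₂ * (P₂ * x) = P₂ * x := fun x => by
    rw [← mul_assoc, h22]
  have h0 : Φ 0 = 0 := by
    have := hlie 0 (zero_mem M) 0 (zero_mem M)
    simpa using this
  have eq1 : (0 : H →L[ℂ] H) =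
      (S * P₂ - ξ • (P₂ * S)) + (P₁ * T - ξ • (T * P₁)) := by
    have := hlie P₁ hP₁M P₂ hP₂M
    rw [h12, h21, smul_zero, sub_zero, h0] at this
    exact this
  have dT11 : P₁ * (T * P₁) = 0 := by
    have e := congrArg (fun X => P₁ * X * P₁) eq1
    simp only [mul_add, add_mul, mul_sub, sub_mul, mul_smul_comm, smul_mul_assoc, neg_mul,
      mul_assoc, z12, z21, i1, i2, h12, h21, hP₁idem, h22, mul_zero, zero_mul,
      smul_zero, sub_zero, zero_sub, zero_add, add_zero, neg_zero] at e
    have e2 : (1 - ξ) • (P₁ * (T * P₁)) = 0 := by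
      rw [sub_smul, one_smul]; exact e.symm
    rcases smul_eq_zero.mp e2 with h | h
    · exact absurd h hξ1'
    · exact h
  have dS22 : P₂ * (S * P₂) = 0 := by
    have e := congrArg (fun X => P₂ * X * P₂) eq1
    simp only [mul_add, add_mul, mul_sub, sub_mul, mul_smul_comm, smul_mul_assoc, neg_mul,
      mul_assoc, z12, z21, i1, i2, h12, h21, hP₁idem, h22, mul_zero, zero_mul,
      smul_zero, sub_zero, zero_sub, zero_add, add_zero, neg_zero] at e
    have e2 : (1 - ξ) • (P₂ * (S * P₂)) = 0 := by
      rw [sub_smul, one_smul]; exact e.symm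
    rcases smul_eq_zero.mp e2 with h | h
    · exact absurd h hξ1'
    · exact h
  have ha : P₁ * (S * P₂) + P₁ * (T * P₂) = 0 := by
    have e := congrArg (fun X => P₁ * X * P₂) eq1
    simp only [mul_add, add_mul, mul_sub, sub_mul, mul_smul_comm, smul_mul_assoc, neg_mul,
      mul_assoc, z12, z21, i1, i2, h12, h21, hP₁idem, h22, mul_zero, zero_mul,
      smul_zero, sub_zero, zero_sub, zero_add, add_zero, neg_zero] at e
    exact e.symm
  have hb : P₂ * (S * P₁) + P₂ * (T * P₁) = 0 := by
    have e := congrArg (fun X => P₂ * X * P₁) eq1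
    simp only [mul_add, add_mul, mul_sub, sub_mul, mul_smul_comm, smul_mul_assoc,
      neg_mul, mul_assoc, z12, z21, i1, i2, h12, h21, hP₁idem, h22, mul_zero, zero_mul,
      smul_zero, sub_zero, zero_sub, zero_add, add_zero, neg_zero] at e
    have e2 : ξ • (P₂ * (S * P₁) + P₂ * (T * P₁)) = 0 := by
      rw [smul_add, ← neg_eq_zero, neg_add]
      exact e.symm
    rcases smul_eq_zero.mp e2 with h | h
    · exact absurd h hξ0
    · exact h
  -- off-diagonal compression identities
  have g1 : ∀ X ∈ M, (P₁ * (S * P₁)) * (X * P₂) = 0 := by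
    intro X hX
    set A : H →L[ℂ] H := P₁ * (X * P₂) with hA
    have hAM : A ∈ M := mul_mem hP₁M (mul_mem hX hP₂M)
    have hPA : P₁ * A = A := i1 _
    have hAP : A * P₁ = 0 := by
      rw [hA, mul_assoc, mul_assoc, h21, mul_zero, mul_zero]
    have e0 := hlie P₁ hP₁M A hAM
    rw [hPA, hAP, smul_zero, sub_zero] at e0
    have e := congrArg (fun Y => P₁ * Y * P₂) e0
    simp only [hA, mul_add, add_mul, mul_sub, sub_mul, mul_smul_comm, smul_mul_assoc,
      neg_mul, mul_assoc, z12, z21, i1, i2, h12, h21, hP₁idem, h22, dS22, dT11,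
      mul_zero, zero_mul, smul_zero, sub_zero, zero_sub, zero_add, add_zero, neg_zero] at e
    rw [← hSdef] at e
    have h' : P₁ * (S * (P₁ * (X * P₂))) = 0 := by
      rw [dS22, mul_zero, mul_zero, smul_zero, sub_zero] at e; exact right_eq_add.mp e
    rw [mul_assoc, mul_assoc]
    exact h'
  have g2 : ∀ X ∈ M, (P₂ * (T * P₂)) * (X * P₁) = 0 := by
    intro X hX
    set A : H →L[ℂ] H := P₂ * (X * P₁) with hA
    have hAM : A ∈ M := mul_mem hP₂M (mul_mem hX hP₁M)
    have hPA : P₂ * A = A := i2 _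
    have hAP : A * P₂ = 0 := by
      rw [hA, mul_assoc, mul_assoc, h12, mul_zero, mul_zero]
    have e0 := hlie P₂ hP₂M A hAM
    rw [hPA, hAP, smul_zero, sub_zero] at e0
    have e := congrArg (fun Y => P₂ * Y * P₁) e0
    simp only [hA, mul_add, add_mul, mul_sub, sub_mul, mul_smul_comm, smul_mul_assoc,
      neg_mul, mul_assoc, z12, z21, i1, i2, h12, h21, hP₁idem, h22, dS22, dT11,
      mul_zero, zero_mul, smul_zero, sub_zero, zero_sub, zero_add, add_zero, neg_zero] at e
    rw [← hTdef] at e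
    have h' : P₂ * (T * (P₂ * (X * P₁))) = 0 := by
      rw [dT11, mul_zero, mul_zero, smul_zero, sub_zero] at e; exact right_eq_add.mp e
    rw [mul_assoc, mul_assoc]
    exact h'
  -- kill the (1,1) corner of S using core-freeness
  have dS11 : P₁ * (S * P₁) = 0 := by
    obtain ⟨E, hEc, hEP, hDE⟩ := aux_carrier M P₂ hP₂M (P₁ * (S * P₁)) g1
    obtain ⟨⟨hEM, hEsa, hEidem⟩, hEcomm⟩ := hEc
    have hQc : VNCentralProjection M (1 - E) := by
      refine ⟨⟨sub_mem (one_mem M) hEM, ?_, ?_⟩, ?_⟩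
      · show star (1 - E) = 1 - E
        rw [star_sub, star_one, hEsa.star_eq]
      · rw [sub_mul, one_mul, mul_sub, mul_one, hEidem, sub_self, sub_zero]
      · intro T' hT'
        rw [sub_mul, mul_sub, one_mul, mul_one, hEcomm T' hT']
    have hQP : (1 - E) * P₁ = 1 - E := by
      have hEP₁ : E * P₁ = E - P₂ := by
        have h1 : E * P₁ = E * 1 - E * P₂ := by
          rw [← mul_sub]
          congr 1
          rw [hP₂def]; abel
        rw [h1, mul_one, hEP]
      rw [sub_mul, one_mul, hEP₁, hP₂def]
      abel
    have hQ0 := hcf _ hQc hQP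
    have hE1 : E = 1 := (sub_eq_zero.mp hQ0).symm
    rw [← mul_one (P₁ * (S * P₁)), ← hE1]
    exact hDE
  -- kill the (2,2) corner of T using the central carrier of P₁
  have dT22 : P₂ * (T * P₂) = 0 := by
    obtain ⟨E, hEc, hEP, hDE⟩ := aux_carrier M P₁ hP₁M (P₂ * (T * P₂)) g2
    have hE1 : E = 1 := by
      have := hcc.2.2 E hEc hEP
      rwa [one_mul] at this
    rw [← mul_one (P₂ * (T * P₂)), ← hE1]
    exact hDE
  -- decompositions
  have hSdec : S = P₁ * (S * P₂) + P₂ * (S * P₁) := by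
    have h1 : S = (P₁ + P₂) * (S * (P₁ + P₂)) := by rw [hsum, mul_one, one_mul]
    simp only [mul_add, add_mul] at h1
    rw [dS11, dS22] at h1
    refine h1.trans ?_
    abel
  have hTdec : T = P₁ * (T * P₂) + P₂ * (T * P₁) := by
    have h1 : T = (P₁ + P₂) * (T * (P₁ + P₂)) := by rw [hsum, mul_one, one_mul]
    simp only [mul_add, add_mul] at h1
    rw [dT11, dT22] at h1
    refine h1.trans ?_
    abel
  refine ⟨h0, P₁ * (S * P₂) - P₂ * (S * P₁),
    sub_mem (mul_mem hP₁M (mul_mem hSM hP₂M)) (mul_mem hP₂M (mul_mem hSM hP₁M)), ?_, ?_⟩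
  · have hrhs : P₁ * (P₁ * (S * P₂) - P₂ * (S * P₁))
        - (P₁ * (S * P₂) - P₂ * (S * P₁)) * P₁
        = P₁ * (S * P₂) + P₂ * (S * P₁) := by
      simp only [mul_sub, sub_mul, mul_assoc, i1, z12, z21, i2, h21, h12, hP₁idem, h22,
        mul_zero, zero_mul, sub_zero, zero_sub, sub_neg_eq_add]
    rw [hrhs]
    exact hSdec
  · have hrhs : P₂ * (P₁ * (S * P₂) - P₂ * (S * P₁))
        - (P₁ * (S * P₂) - P₂ * (S * P₁)) * P₂
        = -(P₁ * (S * P₂)) - P₂ * (S * P₁) := by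
      simp only [mul_sub, sub_mul, mul_assoc, i1, z12, z21, i2, h21, h12, hP₁idem, h22,
        mul_zero, zero_mul, sub_zero, zero_sub, sub_neg_eq_add]
      abel
    rw [hrhs, hTdec]
    have ea : P₁ * (T * P₂) = -(P₁ * (S * P₂)) := by
      rw [eq_neg_iff_add_eq_zero, add_comm]
      exact ha
    have eb : P₂ * (T * P₁) = -(P₂ * (S * P₁)) := by
      rw [eq_neg_iff_add_eq_zero, add_comm]
      exact hb
    rw [ea, eb]
    abel
end

section
/- Let M be a von Neumann algebra with no central summands of type I₁, P₁ ∈ M a nontrivial core-free projection with central carrier I, P₂ = I − P₁, and M_{ij} = P_i M P_j for i, j ∈ {1,2}. Let ξ be a complex scalar with ξ ≠ 0 and ξ ≠ 1, and let Φ : M → M be a nonlinear ξ-Lie derivation with Φ(P₁) = Φ(P₂) = 0. Then for i ≠ j in {1,2} and every T ∈ M_{ij} one has Φ(T) ∈ M_{ij}, i.e., Φ(T) = P_iΦ(T)P_j. -/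
variable {H : Type*} [NormedAddCommGroup H] [InnerProductSpace ℂ H] [CompleteSpace H]

lemma corner_key (M : VonNeumannAlgebra H)
    (P : H →L[ℂ] H) (hPm : P ∈ M) (hPsa : IsSelfAdjoint P) (hPP : P * P = P)
    (ξ : ℂ) (hξ0 : ξ ≠ 0) (hξ1 : ξ ≠ 1)
    (Φ : (H →L[ℂ] H) → (H →L[ℂ] H))
    (hmaps : ∀ T ∈ M, Φ T ∈ M)
    (hlie : ∀ A ∈ M, ∀ B ∈ M,
      Φ (A * B - ξ • (B * A)) =
        (Φ A * B - ξ • (B * Φ A)) + (A * Φ B - ξ • (Φ B * A)))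
    (hΦP : Φ P = 0)
    (T : H →L[ℂ] H) (hTm : T ∈ M) (hT : P * T * (1 - P) = T) :
    Φ T = P * Φ T * (1 - P) := by
  set Q : H →L[ℂ] H := 1 - P with hQdef
  have hQm : Q ∈ M := sub_mem (one_mem M) hPm
  have hQsa : star Q = Q := by rw [hQdef, star_sub, star_one, hPsa.star_eq]
  have hPQ : P * Q = 0 := by rw [hQdef, mul_sub, mul_one, hPP, sub_self]
  have hQP : Q * P = 0 := by rw [hQdef, sub_mul, one_mul, hPP, sub_self]
  have hQQ : Q * Q = Q := by rw [hQdef, mul_sub, mul_one, sub_mul, one_mul, hPP, sub_self, sub_zero]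
  have hPT : P * T = T := by
    conv_lhs => rw [← hT]
    rw [← mul_assoc, ← mul_assoc, hPP, hT]
  have hTQ : T * Q = T := by
    conv_lhs => rw [← hT]
    rw [mul_assoc, hQQ, hT]
  have hTP : T * P = 0 := by
    conv_lhs => rw [← hT]
    rw [mul_assoc, hQP, mul_zero]
  have hQT : Q * T = 0 := by
    conv_lhs => rw [← hT]
    rw [← mul_assoc, ← mul_assoc, hQP, zero_mul, zero_mul]
  have hTT : T * T = 0 := by
    have h : T * T = T * (Q * T) := by rw [← mul_assoc, hTQ]
    rw [h, hQT, mul_zero]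
  have h0 : Φ 0 = 0 := by simpa using hlie 0 (zero_mem M) 0 (zero_mem M)
  -- collapse rules
  have cPP : ∀ y, P * (P * y) = P * y := fun y => by rw [← mul_assoc, hPP]
  have cPQ : ∀ y, P * (Q * y) = 0 := fun y => by rw [← mul_assoc, hPQ, zero_mul]
  have cQP : ∀ y, Q * (P * y) = 0 := fun y => by rw [← mul_assoc, hQP, zero_mul]
  have cQQ : ∀ y, Q * (Q * y) = Q * y := fun y => by rw [← mul_assoc, hQQ]
  have cPT : ∀ y, P * (T * y) = T * y := fun y => by rw [← mul_assoc, hPT]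
  have cTP : ∀ y, T * (P * y) = 0 := fun y => by rw [← mul_assoc, hTP, zero_mul]
  have cQT : ∀ y, Q * (T * y) = 0 := fun y => by rw [← mul_assoc, hQT, zero_mul]
  have cTQ : ∀ y, T * (Q * y) = T * y := fun y => by rw [← mul_assoc, hTQ]
  have hEq1 : Φ T = P * Φ T - ξ • (Φ T * P) := by
    have h := hlie P hPm T hTm
    rw [hΦP, hPT, hTP] at h
    simpa using h
  have corner0 : ∀ X : H →L[ℂ] H, X = P * X - ξ • (X * P) → P * (X * P) = 0 := by
    intro X hX
    have h : P * (X * P) = P * (X * P) - ξ • (P * (X * P)) := by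
      nth_rewrite 1 [hX]
      simp only [mul_sub, sub_mul, smul_mul_assoc, mul_smul_comm, mul_assoc, cPP, hPP]
    rw [eq_sub_iff_add_eq] at h
    have h2 : ξ • (P * (X * P)) = 0 := by
      have := add_eq_left.mp h
      exact this
    exact (smul_eq_zero.mp h2).resolve_left hξ0
  have hPFP : P * (Φ T * P) = 0 := corner0 (Φ T) hEq1
  have hQFQ : Q * (Φ T * Q) = 0 := by
    nth_rewrite 1 [hEq1]
    simp only [mul_sub, sub_mul, mul_smul_comm, smul_mul_assoc, mul_assoc, cQP, hPQ, mul_zero,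
      zero_mul, smul_zero, sub_zero, sub_self, zero_sub, neg_zero]
  have hFT : Φ T * T + T * Φ T = 0 := by
    have h := hlie T hTm T hTm
    rw [hTT, smul_zero, sub_zero, h0] at h
    have h2 : (1 - ξ) • (Φ T * T + T * Φ T) = 0 := by
      have := h.symm
      linear_combination (norm := module) this
    exact (smul_eq_zero.mp h2).resolve_left (sub_ne_zero.mpr (Ne.symm hξ1))
  have hQFT : ∀ y, Q * (Φ T * (T * y)) = 0 := by
    have h : Q * (Φ T * T) = 0 := by
      have h1 := congrArg (fun X => Q * X) hFT
      simp only [mul_add, cQT, mul_zero, add_zero] at h1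
      exact h1
    intro y
    calc Q * (Φ T * (T * y)) = Q * (Φ T * T) * y := by rw [mul_assoc, mul_assoc]
    _ = 0 := by rw [h, zero_mul]
  set S : H →L[ℂ] H := P * (star (Φ T) * Q) with hSdef
  have hSm : S ∈ M := mul_mem hPm (mul_mem (star_mem (hmaps T hTm)) hQm)
  have hPS : ∀ y, P * (S * y) = S * y := fun y => by
    rw [hSdef]; rw [← mul_assoc, ← mul_assoc, hPP]
  have hPS0 : P * S = S := by rw [hSdef, ← mul_assoc, hPP]
  have hSP : S * P = 0 := by rw [hSdef, mul_assoc, mul_assoc, hQP, mul_zero, mul_zero]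
  have hSQ : ∀ y, S * (Q * y) = S * y := fun y => by
    simp only [hSdef, mul_assoc, cQQ]
  have hTS : T * S = 0 := by rw [hSdef, ← mul_assoc, hTP, zero_mul]
  have hST : S * T = 0 := by rw [hSdef, mul_assoc, mul_assoc, hQT, mul_zero, mul_zero]
  have hEq3 : Φ S = P * Φ S - ξ • (Φ S * P) := by
    have h := hlie P hPm S hSm
    rw [hΦP, hPS0, hSP] at h
    simpa using h
  have hPYP : P * (Φ S * P) = 0 := corner0 (Φ S) hEq3
  have hEq4 := hlie T hTm S hSm
  rw [hTS, hST, smul_zero, sub_zero, h0] at hEq4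
  -- hEq4 : 0 = (Φ T * S - ξ • (S * Φ T)) + (T * Φ S - ξ • (Φ S * T))
  have hKey : ξ • (S * (Φ T * P)) = T * (Φ S * P) := by
    have h := congrArg (fun X => P * (X * P)) hEq4
    simp only [add_mul, sub_mul, mul_add, mul_sub, smul_mul_assoc, mul_smul_comm,
      mul_assoc, hSP, hTP, mul_zero, zero_mul, smul_zero, sub_zero, zero_sub,
      hPS, cPT, zero_add, add_zero, mul_neg, neg_mul] at h
    exact neg_add_eq_zero.mp h.symm
  have haz : Q * (Φ T * (S * (Φ T * P))) = 0 := by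
    have h := congrArg (fun X => (Q * (Φ T * P)) * X) hKey
    simp only [mul_smul_comm, mul_assoc, cPT, hPS, hQFT, mul_zero, smul_zero] at h
    exact (smul_eq_zero.mp h).resolve_left hξ0
  set a : H →L[ℂ] H := Q * (Φ T * P) with hadef
  have hsa : star a = S := by
    rw [hadef, hSdef, star_mul, star_mul, hPsa.star_eq, hQsa, mul_assoc]
  have hsaa : star a * a = S * (Φ T * P) := by
    rw [hsa, hadef]
    exact hSQ _
  have h7 : a * (star a * a) = 0 := by
    rw [hsaa, hadef]
    simp only [mul_assoc, hPS]
    exact haz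
  have h8 : star a * a = 0 := by
    have hself : star (star a * a) = star a * a := by rw [star_mul, star_star]
    have h9 : (star a * a) * (star a * a) = 0 := by
      rw [mul_assoc, h7, mul_zero]
    refine (CStarRing.star_mul_self_eq_zero_iff _).mp ?_
    rw [hself]
    exact h9
  have ha0 : a = 0 := (CStarRing.star_mul_self_eq_zero_iff _).mp h8
  have hPsum : P + Q = 1 := by rw [hQdef]; abel
  calc Φ T = (P + Q) * Φ T * (P + Q) := by rw [hPsum, one_mul, mul_one]
    _ = P * (Φ T * P) + P * (Φ T * Q) + (Q * (Φ T * P) + Q * (Φ T * Q)) := by noncomm_ring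
    _ = P * (Φ T * Q) := by rw [hPFP, hQFQ, ← hadef, ha0]; simp
    _ = P * Φ T * Q := by rw [mul_assoc]

/-- **Claim 2 of Theorem 1.2.** A nonlinear ξ-Lie derivation `Φ` with
`Φ P₁ = Φ P₂ = 0` preserves the off-diagonal corners `M_{ij}` (`i ≠ j`). -/
theorem xiLie_preserves_offdiagonal_corners (M : VonNeumannAlgebra H)
    (hM : VNNoTypeI1 M)
    (P₁ : H →L[ℂ] H) (hproj : VNProjection M P₁)
    (hnt : P₁ ≠ 0 ∧ P₁ ≠ 1) (hcf : VNCoreFree M P₁)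
    (hcc : VNCentralCarrier M P₁ 1)
    (ξ : ℂ) (hξ0 : ξ ≠ 0) (hξ1 : ξ ≠ 1)
    (Φ : (H →L[ℂ] H) → (H →L[ℂ] H))
    (hmaps : ∀ T ∈ M, Φ T ∈ M)
    (hlie : ∀ A ∈ M, ∀ B ∈ M,
      Φ (A * B - ξ • (B * A)) =
        (Φ A * B - ξ • (B * Φ A)) + (A * Φ B - ξ • (Φ B * A)))
    (hP1 : Φ P₁ = 0) (hP2 : Φ (1 - P₁) = 0)
    (Pi Pj : H →L[ℂ] H)
    (hij : (Pi = P₁ ∧ Pj = 1 - P₁) ∨ (Pi = 1 - P₁ ∧ Pj = P₁)) :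
    ∀ T ∈ M, Pi * T * Pj = T → Φ T = Pi * Φ T * Pj := by
  obtain ⟨hPm, hPsa, hPP⟩ := hproj
  rcases hij with ⟨hi, hj⟩ | ⟨hi, hj⟩ <;> rw [hi, hj] <;> intro T hTm hT
  · exact corner_key M P₁ hPm hPsa hPP ξ hξ0 hξ1 Φ hmaps hlie hP1 T hTm hT
  · have hQm : (1 - P₁) ∈ M := sub_mem (one_mem M) hPm
    have hQsa : IsSelfAdjoint (1 - P₁ : H →L[ℂ] H) := (IsSelfAdjoint.one _).sub hPsa
    have hQQ : (1 - P₁ : H →L[ℂ] H) * (1 - P₁) = 1 - P₁ := by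
      calc (1 - P₁ : H →L[ℂ] H) * (1 - P₁) = 1 - P₁ - P₁ + P₁ * P₁ := by noncomm_ring
      _ = 1 - P₁ := by rw [hPP]; abel
    have hT' : (1 - P₁) * T * (1 - (1 - P₁)) = T := by rw [sub_sub_cancel]; exact hT
    have hkey := corner_key M (1 - P₁) hQm hQsa hQQ ξ hξ0 hξ1 Φ hmaps hlie hP2 T hTm hT'
    rw [sub_sub_cancel] at hkey
    exact hkey
end

section
/- Let M be a von Neumann algebra, P₁ ∈ M a nontrivial core-free projection with central carrier I, P₂ = I − P₁, and M_{ij} = P_i M P_j for i, j ∈ {1,2}. Let ξ be a complex scalar with ξ ≠ 0 and ξ ≠ 1, and let Φ : M → M be a nonlinear ξ-Lie derivation with Φ(P₁) = Φ(P₂) = 0. Then for i ∈ {1,2} and every T ∈ M_{ii} one has Φ(T) ∈ M_{ii}, i.e., Φ(T) = P_iΦ(T)P_i. -/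
variable {H : Type*} [NormedAddCommGroup H] [InnerProductSpace ℂ H] [CompleteSpace H]

lemma corner_aux (ξ : ℂ) (hξ0 : ξ ≠ 0) (hξ1 : ξ ≠ 1) (Q X : H →L[ℂ] H)
    (hQ : Q * Q = Q) (hR : X * (1 - Q) = ξ • ((1 - Q) * X)) : X = Q * X * Q := by
  have hQ' : (1 - Q) * (1 - Q) = 1 - Q := by
    rw [mul_sub, sub_mul, sub_mul, mul_one, one_mul, hQ]; abel
  have h1 : X * (1 - Q) = ξ • ((1 - Q) * X * (1 - Q)) := by
    calc X * (1 - Q) = X * (1 - Q) * (1 - Q) := by rw [mul_assoc, hQ']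
    _ = ξ • ((1 - Q) * X) * (1 - Q) := by rw [hR]
    _ = ξ • ((1 - Q) * X * (1 - Q)) := by rw [smul_mul_assoc]
  have h2 : (1 - Q) * X * (1 - Q) = ξ • ((1 - Q) * X * (1 - Q)) := by
    calc (1 - Q) * X * (1 - Q) = (1 - Q) * (X * (1 - Q)) := by rw [mul_assoc]
    _ = (1 - Q) * (ξ • ((1 - Q) * X * (1 - Q))) := by rw [h1]
    _ = ξ • ((1 - Q) * ((1 - Q) * X * (1 - Q))) := by rw [mul_smul_comm]
    _ = ξ • ((1 - Q) * X * (1 - Q)) := by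
        rw [← mul_assoc, ← mul_assoc, hQ']
  have h3 : (1 - Q) * X * (1 - Q) = 0 := by
    have : (1 - ξ) • ((1 - Q) * X * (1 - Q)) = 0 := by
      rw [sub_smul, one_smul, ← h2, sub_self]
    rcases smul_eq_zero.mp this with h | h
    · exact absurd (by linear_combination -h : ξ = 1) hξ1
    · exact h
  have h4 : X * (1 - Q) = 0 := by rw [h1, h3, smul_zero]
  have h5 : (1 - Q) * X = 0 := by
    have : ξ • ((1 - Q) * X) = 0 := by rw [← hR, h4]
    exact (smul_eq_zero.mp this).resolve_left hξ0
  have hXQ : X * Q = X := by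
    have := h4; rw [mul_sub, mul_one, sub_eq_zero] at this; exact this.symm
  have hQX : Q * X = X := by
    have := h5; rw [sub_mul, one_mul, sub_eq_zero] at this; exact this.symm
  rw [hQX, hXQ]

/-- **Claim 3 of Theorem 1.2.** A nonlinear ξ-Lie derivation `Φ` with
`Φ P₁ = Φ P₂ = 0` preserves the diagonal corners `M_{ii}`. -/
theorem xiLie_preserves_diagonal_corners (M : VonNeumannAlgebra H)
    (P₁ : H →L[ℂ] H) (hproj : VNProjection M P₁)
    (hnt : P₁ ≠ 0 ∧ P₁ ≠ 1) (hcf : VNCoreFree M P₁)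
    (hcc : VNCentralCarrier M P₁ 1)
    (ξ : ℂ) (hξ0 : ξ ≠ 0) (hξ1 : ξ ≠ 1)
    (Φ : (H →L[ℂ] H) → (H →L[ℂ] H))
    (hmaps : ∀ T ∈ M, Φ T ∈ M)
    (hlie : ∀ A ∈ M, ∀ B ∈ M,
      Φ (A * B - ξ • (B * A)) =
        (Φ A * B - ξ • (B * Φ A)) + (A * Φ B - ξ • (Φ B * A)))
    (hP1 : Φ P₁ = 0) (hP2 : Φ (1 - P₁) = 0) :
    ∀ Pi ∈ ({P₁, 1 - P₁} : Set (H →L[ℂ] H)),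
      ∀ T ∈ M, Pi * T * Pi = T → Φ T = Pi * Φ T * Pi := by
  classical
  have hP1M : P₁ ∈ M := hproj.1
  have h0 : Φ 0 = 0 := by
    have := hlie 0 (zero_mem M) 0 (zero_mem M)
    simpa using this
  intro Pi hPi T hT hTT
  have hQdata : Pi * Pi = Pi ∧ (1 - Pi) ∈ M ∧ Φ (1 - Pi) = 0 := by
    simp only [Set.mem_insert_iff, Set.mem_singleton_iff] at hPi
    rcases hPi with rfl | rfl
    · exact ⟨hproj.2.2, sub_mem (one_mem M) hP1M, hP2⟩
    · refine ⟨?_, ?_, ?_⟩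
      · rw [mul_sub, sub_mul, sub_mul, mul_one, one_mul, hproj.2.2]; abel
      · rw [sub_sub_cancel]; exact hP1M
      · rw [sub_sub_cancel]; exact hP1
  obtain ⟨hQ, hQ'M, hΦQ'⟩ := hQdata
  have hTQ : T * Pi = T := by
    conv_lhs => rw [← hTT]
    rw [mul_assoc, mul_assoc, hQ, ← mul_assoc, hTT]
  have hQT : Pi * T = T := by
    conv_lhs => rw [← hTT]
    rw [← mul_assoc, ← mul_assoc, hQ, hTT]
  have hTQ' : T * (1 - Pi) = 0 := by rw [mul_sub, mul_one, hTQ, sub_self]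
  have hQ'T : (1 - Pi) * T = 0 := by rw [sub_mul, one_mul, hQT, sub_self]
  have key := hlie T hT (1 - Pi) hQ'M
  rw [hTQ', hQ'T, smul_zero, sub_zero, h0, hΦQ', mul_zero, zero_mul, smul_zero,
    sub_zero, add_zero] at key
  have hR : Φ T * (1 - Pi) = ξ • ((1 - Pi) * Φ T) := by
    rw [← sub_eq_zero, ← key]
  exact corner_aux ξ hξ0 hξ1 Pi (Φ T) hQ hR
end

section
/- Let M be a von Neumann algebra with no central summands of type I₁, P₁ ∈ M a nontrivial core-free projection with central carrier I, P₂ = I − P₁, and M_{ij} = P_i M P_j for i, j ∈ {1,2}. Let ξ be a complex scalar with ξ ≠ 0 and ξ ≠ 1, and let Φ : M → M be a nonlinear ξ-Lie derivation with Φ(P₁) = Φ(P₂) = 0. Then for i ≠ j in {1,2}, all T_{ii} ∈ M_{ii}, T_{ij} ∈ M_{ij}, T_{ji} ∈ M_{ji}: Φ(T_{ii} + T_{ij}) = Φ(T_{ii}) + Φ(T_{ij}) and Φ(T_{ii} + T_{ji}) = Φ(T_{ii}) + Φ(T_{ji}). -/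
variable {H : Type*} [NormedAddCommGroup H] [InnerProductSpace ℂ H] [CompleteSpace H]

set_option maxHeartbeats 800000 in
lemma vn_kill (M : VonNeumannAlgebra H) (Pj T : H →L[ℂ] H)
    (hPjM : Pj ∈ M) (hT : T ∈ M)
    (h : ∀ S ∈ M, T * (S * Pj) = 0)
    (hfull : ∀ Q, VNCentralProjection M Q → Q * Pj = Pj → Q = 1) :
    T = 0 := by
  classical
  set gen : Set H := {x | ∃ S ∈ M, ∃ v : H, S (Pj v) = x} with hgen
  set K0 : Submodule ℂ H := Submodule.span ℂ gen with hK0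
  set K : Submodule ℂ H := K0.topologicalClosure with hK
  haveI : CompleteSpace K := K0.isClosed_topologicalClosure.completeSpace_coe
  set Q : H →L[ℂ] H := K.subtypeL.comp (K.orthogonalProjectionOnto) with hQdef
  have hQapp : ∀ v : H, Q v = (K.orthogonalProjectionOnto v : H) := fun v => rfl
  have hQmem : ∀ v : H, Q v ∈ K := fun v => (K.orthogonalProjectionOnto v).2
  have hQfix : ∀ x ∈ K, Q x = x := fun x hx => Submodule.starProjection_eq_self_iff.mpr hx
  have hQorth : ∀ x ∈ Kᗮ, Q x = 0 := fun x hx => by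
    rw [hQapp, Submodule.orthogonalProjectionOnto_apply_of_mem_orthogonal hx,
      Submodule.coe_zero]
  have hinv : ∀ S : H →L[ℂ] H, (∀ x ∈ gen, S x ∈ K0) → ∀ x ∈ K, S x ∈ K := by
    intro S hS x hx
    have h1 : K0 ≤ Submodule.comap (S : H →ₗ[ℂ] H) K := by
      rw [hK0, Submodule.span_le]
      intro y hy
      exact K0.le_topologicalClosure (hS y hy)
    have h2 : K ≤ Submodule.comap (S : H →ₗ[ℂ] H) K := by
      refine Submodule.topologicalClosure_minimal K0 h1 ?_
      rw [Submodule.comap_coe]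
      exact K0.isClosed_topologicalClosure.preimage S.continuous
    exact h2 hx
  have hcomm : ∀ S : H →L[ℂ] H, (∀ x ∈ K, S x ∈ K) → (∀ x ∈ K, (star S) x ∈ K) →
      Q * S = S * Q := by
    intro S hS hS'
    ext v
    have hv2 : v - Q v ∈ Kᗮ := Submodule.sub_starProjection_mem_orthogonal v
    have hSv2 : S (v - Q v) ∈ Kᗮ := by
      rw [Submodule.mem_orthogonal]
      intro k hk
      have : inner ℂ ((ContinuousLinearMap.adjoint S) k) (v - Q v) = (0 : ℂ) :=
        (Submodule.mem_orthogonal K _).mp hv2 _ (by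
          have := hS' k hk
          rwa [ContinuousLinearMap.star_eq_adjoint] at this)
      rwa [ContinuousLinearMap.adjoint_inner_left] at this
    have hsplit : Q v + (v - Q v) = v := by abel
    have e1 : Q (S v) = Q (S (Q v)) + Q (S (v - Q v)) := by
      rw [← map_add, ← map_add, hsplit]
    rw [hQfix _ (hS _ (hQmem v)), hQorth _ hSv2, add_zero] at e1
    simpa [ContinuousLinearMap.mul_apply] using e1
  have hQM : ∀ S ∈ M, Q * S = S * Q := by
    intro S hS
    apply hcomm
    · apply hinv
      rintro x ⟨S', hS', v, rfl⟩
      exact Submodule.subset_span ⟨S * S', mul_mem hS hS', v, rfl⟩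
    · apply hinv
      rintro x ⟨S', hS', v, rfl⟩
      exact Submodule.subset_span ⟨star S * S', mul_mem (star_mem hS) hS', v, rfl⟩
  have hQM' : ∀ S ∈ M.commutant, Q * S = S * Q := by
    intro S hS
    have hSc : ∀ g ∈ M, g * S = S * g := VonNeumannAlgebra.mem_commutant_iff.mp hS
    have hSc' : ∀ g ∈ M, g * star S = star S * g :=
      VonNeumannAlgebra.mem_commutant_iff.mp (star_mem hS)
    apply hcomm
    · apply hinv
      rintro x ⟨S', hS', v, rfl⟩
      refine Submodule.subset_span ⟨S', hS', S v, ?_⟩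
      have := congrFun (congrArg DFunLike.coe (hSc (S' * Pj) (mul_mem hS' hPjM))) v
      simpa [ContinuousLinearMap.mul_apply] using this
    · apply hinv
      rintro x ⟨S', hS', v, rfl⟩
      refine Submodule.subset_span ⟨S', hS', star S v, ?_⟩
      have := congrFun (congrArg DFunLike.coe (hSc' (S' * Pj) (mul_mem hS' hPjM))) v
      simpa [ContinuousLinearMap.mul_apply] using this
  have hQmemM : Q ∈ M := by
    have : Q ∈ M.commutant.commutant :=
      VonNeumannAlgebra.mem_commutant_iff.mpr fun g hg => (hQM' g hg).symm
    rwa [VonNeumannAlgebra.commutant_commutant] at this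
  have hQsa : IsSelfAdjoint Q := isSelfAdjoint_starProjection K
  have hQidem : Q * Q = Q := by
    ext v
    exact hQfix _ (hQmem v)
  have hQcp : VNCentralProjection M Q := ⟨⟨hQmemM, hQsa, hQidem⟩, hQM⟩
  have hQPj : Q * Pj = Pj := by
    ext v
    show Q (Pj v) = Pj v
    exact hQfix _ (K0.le_topologicalClosure (Submodule.subset_span ⟨1, one_mem M, v, rfl⟩))
  have hQ1 : Q = 1 := hfull Q hQcp hQPj
  have hKtop : ∀ v : H, v ∈ K := by
    intro v
    have : Q v = v := by rw [hQ1]; rfl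
    rw [← this]; exact hQmem v
  have hker : K ≤ LinearMap.ker (T : H →ₗ[ℂ] H) := by
    apply Submodule.topologicalClosure_minimal
    · rw [hK0, Submodule.span_le]
      rintro x ⟨S, hS, v, rfl⟩
      have := congrFun (congrArg DFunLike.coe (h S hS)) v
      simpa [ContinuousLinearMap.mul_apply] using this
    · exact ContinuousLinearMap.isClosed_ker T
  ext v
  simpa using hker (hKtop v)

set_option maxHeartbeats 800000 in
lemma vn_auxA (M : VonNeumannAlgebra H)
    (ξ : ℂ) (hξ0 : ξ ≠ 0) (hξ1 : ξ ≠ 1)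
    (Φ : (H →L[ℂ] H) → (H →L[ℂ] H))
    (hmaps : ∀ T ∈ M, Φ T ∈ M)
    (hlie : ∀ A ∈ M, ∀ B ∈ M,
      Φ (A * B - ξ • (B * A)) =
        (Φ A * B - ξ • (B * Φ A)) + (A * Φ B - ξ • (Φ B * A)))
    (Pi Pj : H →L[ℂ] H) (hPiM : Pi ∈ M) (hPjM : Pj ∈ M)
    (hsum : Pi + Pj = 1) (hPj2 : Pj * Pj = Pj)
    (hΦPj : Φ Pj = 0)
    (hkill : ∀ T ∈ M, (∀ S ∈ M, T * (S * Pj) = 0) → T = 0)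
    (Tii : H →L[ℂ] H) (hTiiM : Tii ∈ M) (hTii : Pi * Tii * Pi = Tii)
    (Tij : H →L[ℂ] H) (hTijM : Tij ∈ M) (hTij : Pi * Tij * Pj = Tij) :
    Φ (Tii + Tij) = Φ Tii + Φ Tij := by
  have hPieq : Pi = 1 - Pj := by rw [← hsum]; abel
  have hPiPj : Pi * Pj = 0 := by rw [hPieq, sub_mul, one_mul, hPj2, sub_self]
  have hPjPi : Pj * Pi = 0 := by rw [hPieq, mul_sub, mul_one, hPj2, sub_self]
  have hPi2 : Pi * Pi = Pi := by
    nth_rw 2 [hPieq]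
    rw [mul_sub, mul_one, hPiPj, sub_zero]
  -- component facts
  have hTiiPj : Tii * Pj = 0 := by rw [← hTii, mul_assoc, hPiPj, mul_zero]
  have hPjTii : Pj * Tii = 0 := by
    rw [← hTii, ← mul_assoc, ← mul_assoc, hPjPi, zero_mul, zero_mul]
  have hTiiPi : Tii * Pi = Tii := by
    conv_lhs => rw [← hTii]
    rw [mul_assoc (Pi * Tii) Pi Pi, hPi2, hTii]
  have hTijPj : Tij * Pj = Tij := by
    conv_lhs => rw [← hTij]
    rw [mul_assoc (Pi * Tij) Pj Pj, hPj2, hTij]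
  have hTijPi : Tij * Pi = 0 := by rw [← hTij, mul_assoc, hPjPi, mul_zero]
  have hPjTij : Pj * Tij = 0 := by
    rw [← hTij, ← mul_assoc, ← mul_assoc, hPjPi, zero_mul, zero_mul]
  have hWM : Tii + Tij ∈ M := add_mem hTiiM hTijM
  have h0 : Φ 0 = 0 := by simpa using hlie 0 (zero_mem M) 0 (zero_mem M)
  have hA : Φ Tij = Φ (Tii + Tij) * Pj - ξ • (Pj * Φ (Tii + Tij)) := by
    simpa [add_mul, mul_add, hTiiPj, hTijPj, hPjTii, hPjTij, hΦPj]
      using hlie (Tii + Tij) hWM Pj hPjM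
  have hB : Φ Tij = Φ Tij * Pj - ξ • (Pj * Φ Tij) := by
    simpa [hTijPj, hPjTij, hΦPj] using hlie Tij hTijM Pj hPjM
  have hC : (0 : H →L[ℂ] H) = Φ Tii * Pj - ξ • (Pj * Φ Tii) := by
    simpa [hTiiPj, hPjTii, hΦPj, h0] using hlie Tii hTiiM Pj hPjM
  set T : H →L[ℂ] H := Φ (Tii + Tij) - Φ Tii - Φ Tij with hTdef
  have keyq : T * Pj = ξ • (Pj * T) := by
    have expand : T * Pj - ξ • (Pj * T) =
        (Φ (Tii + Tij) * Pj - ξ • (Pj * Φ (Tii + Tij)))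
          - (Φ Tii * Pj - ξ • (Pj * Φ Tii)) - (Φ Tij * Pj - ξ • (Pj * Φ Tij)) := by
      rw [hTdef]
      simp only [sub_mul, mul_sub, smul_sub]
      abel
    have : T * Pj - ξ • (Pj * T) = 0 := by
      rw [expand, ← hA, ← hB, ← hC]
      abel
    exact sub_eq_zero.mp this
  -- T has only the ii-corner
  have hPjT : Pj * T = 0 := by
    have alpha : Pj * (T * Pj) = ξ • (Pj * T) := by
      rw [keyq, mul_smul_comm, ← mul_assoc, hPj2]
    have beta : T * Pj = ξ • (Pj * (T * Pj)) := by
      calc T * Pj = (T * Pj) * Pj := by rw [mul_assoc, hPj2]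
        _ = (ξ • (Pj * T)) * Pj := by rw [keyq]
        _ = ξ • (Pj * (T * Pj)) := by rw [smul_mul_assoc, mul_assoc]
    have h2 : T * Pj = ξ • (ξ • (Pj * T)) := by rw [beta, alpha]
    rw [keyq] at h2
    have h4 : (ξ - ξ * ξ) • (Pj * T) = 0 := by
      rw [sub_smul, mul_smul, ← h2, sub_self]
    rcases smul_eq_zero.mp h4 with h5 | h5
    · exfalso
      have : ξ * (1 - ξ) = 0 := by ring_nf; ring_nf at h5; linear_combination h5
      rcases mul_eq_zero.mp this with h6 | h6
      · exact hξ0 h6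
      · exact hξ1 (by linear_combination -h6)
    · exact h5
  have hTPj : T * Pj = 0 := by rw [keyq, hPjT, smul_zero]
  have hTPi : T * Pi = T := by
    have : T * Pi + T * Pj = T := by rw [← mul_add, hsum, mul_one]
    rwa [hTPj, add_zero] at this
  -- step 2 : T * (S * Pj) = 0 for all S
  have hTzero : T = 0 := by
    apply hkill T (sub_mem (sub_mem (hmaps _ hWM) (hmaps _ hTiiM)) (hmaps _ hTijM))
    intro S hS
    set Sij : H →L[ℂ] H := Pi * S * Pj with hSijdef
    have hSijM : Sij ∈ M := mul_mem (mul_mem hPiM hS) hPjM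
    have hTijSij : Tij * Sij = 0 := by
      rw [hSijdef, ← mul_assoc, ← mul_assoc, hTijPi, zero_mul, zero_mul]
    have hSijTii : Sij * Tii = 0 := by rw [hSijdef, mul_assoc, hPjTii, mul_zero]
    have hSijTij : Sij * Tij = 0 := by rw [hSijdef, mul_assoc, hPjTij, mul_zero]
    have hA' : Φ (Tii * Sij) =
        (Φ (Tii + Tij) * Sij - ξ • (Sij * Φ (Tii + Tij)))
          + ((Tii + Tij) * Φ Sij - ξ • (Φ Sij * (Tii + Tij))) := by
      have := hlie (Tii + Tij) hWM Sij hSijM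
      rw [add_mul, hTijSij, add_zero, mul_add, hSijTii, hSijTij, add_zero, smul_zero,
        sub_zero] at this
      exact this
    have hB' : Φ (Tii * Sij) =
        (Φ Tii * Sij - ξ • (Sij * Φ Tii)) + (Tii * Φ Sij - ξ • (Φ Sij * Tii)) := by
      have := hlie Tii hTiiM Sij hSijM
      rwa [hSijTii, smul_zero, sub_zero] at this
    have hC' : (0 : H →L[ℂ] H) =
        (Φ Tij * Sij - ξ • (Sij * Φ Tij)) + (Tij * Φ Sij - ξ • (Φ Sij * Tij)) := by
      have := hlie Tij hTijM Sij hSijM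
      rwa [hTijSij, hSijTij, smul_zero, sub_zero, h0] at this
    have hW : (Tii + Tij) * Φ Sij - ξ • (Φ Sij * (Tii + Tij)) =
        (Tii * Φ Sij - ξ • (Φ Sij * Tii)) + (Tij * Φ Sij - ξ • (Φ Sij * Tij)) := by
      simp only [add_mul, mul_add, smul_add]
      abel
    have hfin : (Φ (Tii + Tij) * Sij - ξ • (Sij * Φ (Tii + Tij)))
        - (Φ Tii * Sij - ξ • (Sij * Φ Tii)) - (Φ Tij * Sij - ξ • (Sij * Φ Tij)) = 0 := by
      have eA : Φ (Tii + Tij) * Sij - ξ • (Sij * Φ (Tii + Tij)) =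
          Φ (Tii * Sij) - ((Tii + Tij) * Φ Sij - ξ • (Φ Sij * (Tii + Tij))) := by
        rw [hA']; abel
      have eC : Φ Tij * Sij - ξ • (Sij * Φ Tij) =
          -(Tij * Φ Sij - ξ • (Φ Sij * Tij)) :=
        eq_neg_of_add_eq_zero_left hC'.symm
      rw [eA, eC, hB', hW]
      abel
    have hTS : T * Sij = ξ • (Sij * T) := by
      apply sub_eq_zero.mp
      have expand2 : T * Sij - ξ • (Sij * T) =
          (Φ (Tii + Tij) * Sij - ξ • (Sij * Φ (Tii + Tij)))
            - (Φ Tii * Sij - ξ • (Sij * Φ Tii)) - (Φ Tij * Sij - ξ • (Sij * Φ Tij)) := by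
        rw [hTdef]
        simp only [sub_mul, mul_sub, smul_sub]
        abel
      rw [expand2, hfin]
    have h7 : Sij * T = 0 := by
      rw [hSijdef, mul_assoc (Pi * S) Pj T, hPjT, mul_zero]
    have h8 : T * Sij = T * (S * Pj) := by
      rw [hSijdef, ← mul_assoc, ← mul_assoc, hTPi, mul_assoc]
    rw [← h8, hTS, h7, smul_zero]
  rw [hTdef, sub_sub, sub_eq_zero] at hTzero
  exact hTzero

set_option maxHeartbeats 800000 in
lemma vn_auxB (M : VonNeumannAlgebra H)
    (ξ : ℂ) (hξ0 : ξ ≠ 0) (hξ1 : ξ ≠ 1)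
    (Φ : (H →L[ℂ] H) → (H →L[ℂ] H))
    (hmaps : ∀ T ∈ M, Φ T ∈ M)
    (hlie : ∀ A ∈ M, ∀ B ∈ M,
      Φ (A * B - ξ • (B * A)) =
        (Φ A * B - ξ • (B * Φ A)) + (A * Φ B - ξ • (Φ B * A)))
    (Pi Pj : H →L[ℂ] H) (hPiM : Pi ∈ M) (hPjM : Pj ∈ M)
    (hsum : Pi + Pj = 1) (hPj2 : Pj * Pj = Pj) (hPjsa : IsSelfAdjoint Pj)
    (hΦPj : Φ Pj = 0)
    (hkill : ∀ T ∈ M, (∀ S ∈ M, T * (S * Pj) = 0) → T = 0)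
    (Tii : H →L[ℂ] H) (hTiiM : Tii ∈ M) (hTii : Pi * Tii * Pi = Tii)
    (Tji : H →L[ℂ] H) (hTjiM : Tji ∈ M) (hTji : Pj * Tji * Pi = Tji) :
    Φ (Tii + Tji) = Φ Tii + Φ Tji := by
  have hPieq : Pi = 1 - Pj := by rw [← hsum]; abel
  have hPiPj : Pi * Pj = 0 := by rw [hPieq, sub_mul, one_mul, hPj2, sub_self]
  have hPjPi : Pj * Pi = 0 := by rw [hPieq, mul_sub, mul_one, hPj2, sub_self]
  have hPi2 : Pi * Pi = Pi := by
    nth_rw 2 [hPieq]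
    rw [mul_sub, mul_one, hPiPj, sub_zero]
  have hTiiPj : Tii * Pj = 0 := by rw [← hTii, mul_assoc, hPiPj, mul_zero]
  have hPjTii : Pj * Tii = 0 := by
    rw [← hTii, ← mul_assoc, ← mul_assoc, hPjPi, zero_mul, zero_mul]
  have hTiiPi : Tii * Pi = Tii := by
    conv_lhs => rw [← hTii]
    rw [mul_assoc (Pi * Tii) Pi Pi, hPi2, hTii]
  have hPjTji : Pj * Tji = Tji := by
    conv_lhs => rw [← hTji]
    rw [← mul_assoc, ← mul_assoc, hPj2, hTji]
  have hTjiPi : Tji * Pi = Tji := by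
    conv_lhs => rw [← hTji]
    rw [mul_assoc (Pj * Tji) Pi Pi, hPi2, hTji]
  have hTjiPj : Tji * Pj = 0 := by rw [← hTji, mul_assoc, hPiPj, mul_zero]
  have hPiTji : Pi * Tji = 0 := by
    rw [← hTji, ← mul_assoc, ← mul_assoc, hPiPj, zero_mul, zero_mul]
  have hWM : Tii + Tji ∈ M := add_mem hTiiM hTjiM
  have h0 : Φ 0 = 0 := by simpa using hlie 0 (zero_mem M) 0 (zero_mem M)
  have hA : Φ Tji = Pj * Φ (Tii + Tji) - ξ • (Φ (Tii + Tji) * Pj) := by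
    simpa [mul_add, add_mul, hPjTii, hPjTji, hTiiPj, hTjiPj, hΦPj]
      using hlie Pj hPjM (Tii + Tji) hWM
  have hB : Φ Tji = Pj * Φ Tji - ξ • (Φ Tji * Pj) := by
    simpa [hPjTji, hTjiPj, hΦPj] using hlie Pj hPjM Tji hTjiM
  have hC : (0 : H →L[ℂ] H) = Pj * Φ Tii - ξ • (Φ Tii * Pj) := by
    simpa [hPjTii, hTiiPj, hΦPj, h0] using hlie Pj hPjM Tii hTiiM
  set T : H →L[ℂ] H := Φ (Tii + Tji) - Φ Tii - Φ Tji with hTdef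
  have keyq : Pj * T = ξ • (T * Pj) := by
    have expand : Pj * T - ξ • (T * Pj) =
        (Pj * Φ (Tii + Tji) - ξ • (Φ (Tii + Tji) * Pj))
          - (Pj * Φ Tii - ξ • (Φ Tii * Pj)) - (Pj * Φ Tji - ξ • (Φ Tji * Pj)) := by
      rw [hTdef]
      simp only [sub_mul, mul_sub, smul_sub]
      abel
    have : Pj * T - ξ • (T * Pj) = 0 := by
      rw [expand, ← hA, ← hB, ← hC]
      abel
    exact sub_eq_zero.mp this
  have hTPj : T * Pj = 0 := by
    have alpha : (Pj * T) * Pj = ξ • (T * Pj) := by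
      rw [keyq, smul_mul_assoc, mul_assoc, hPj2]
    have beta : Pj * T = ξ • ((Pj * T) * Pj) := by
      calc Pj * T = Pj * (Pj * T) := by rw [← mul_assoc, hPj2]
        _ = Pj * (ξ • (T * Pj)) := by rw [keyq]
        _ = ξ • (Pj * (T * Pj)) := by rw [mul_smul_comm]
        _ = ξ • ((Pj * T) * Pj) := by rw [mul_assoc]
    have h2 : Pj * T = ξ • (ξ • (T * Pj)) := by rw [beta, alpha]
    rw [keyq] at h2
    have h4 : (ξ - ξ * ξ) • (T * Pj) = 0 := by
      rw [sub_smul, mul_smul, ← h2, sub_self]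
    rcases smul_eq_zero.mp h4 with h5 | h5
    · exfalso
      have : ξ * (1 - ξ) = 0 := by linear_combination h5
      rcases mul_eq_zero.mp this with h6 | h6
      · exact hξ0 h6
      · exact hξ1 (by linear_combination -h6)
    · exact h5
  have hPjT : Pj * T = 0 := by rw [keyq, hTPj, smul_zero]
  have hPiT : Pi * T = T := by
    have : Pi * T + Pj * T = T := by rw [← add_mul, hsum, one_mul]
    rwa [hPjT, add_zero] at this
  have hTmem : T ∈ M :=
    sub_mem (sub_mem (hmaps _ hWM) (hmaps _ hTiiM)) (hmaps _ hTjiM)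
  have hmain : ∀ S ∈ M, (Pj * S) * T = 0 := by
    intro S hS
    set Sji : H →L[ℂ] H := Pj * S * Pi with hSjidef
    have hSjiM : Sji ∈ M := mul_mem (mul_mem hPjM hS) hPiM
    have hSjiTji : Sji * Tji = 0 := by
      rw [hSjidef, mul_assoc (Pj * S) Pi Tji, hPiTji, mul_zero]
    have hTiiSji : Tii * Sji = 0 := by
      rw [hSjidef, ← mul_assoc, ← mul_assoc, hTiiPj, zero_mul, zero_mul]
    have hTjiSji : Tji * Sji = 0 := by
      rw [hSjidef, ← mul_assoc, ← mul_assoc, hTjiPj, zero_mul, zero_mul]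
    have hA' : Φ (Sji * Tii) =
        (Φ Sji * (Tii + Tji) - ξ • ((Tii + Tji) * Φ Sji))
          + (Sji * Φ (Tii + Tji) - ξ • (Φ (Tii + Tji) * Sji)) := by
      have := hlie Sji hSjiM (Tii + Tji) hWM
      rwa [mul_add, hSjiTji, add_zero, add_mul, hTiiSji, hTjiSji, add_zero, smul_zero,
        sub_zero] at this
    have hB' : Φ (Sji * Tii) =
        (Φ Sji * Tii - ξ • (Tii * Φ Sji)) + (Sji * Φ Tii - ξ • (Φ Tii * Sji)) := by
      have := hlie Sji hSjiM Tii hTiiM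
      rwa [hTiiSji, smul_zero, sub_zero] at this
    have hC' : (0 : H →L[ℂ] H) =
        (Φ Sji * Tji - ξ • (Tji * Φ Sji)) + (Sji * Φ Tji - ξ • (Φ Tji * Sji)) := by
      have := hlie Sji hSjiM Tji hTjiM
      rwa [hSjiTji, hTjiSji, smul_zero, sub_zero, h0] at this
    have hW : Φ Sji * (Tii + Tji) - ξ • ((Tii + Tji) * Φ Sji) =
        (Φ Sji * Tii - ξ • (Tii * Φ Sji)) + (Φ Sji * Tji - ξ • (Tji * Φ Sji)) := by
      simp only [add_mul, mul_add, smul_add]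
      abel
    have hfin : (Sji * Φ (Tii + Tji) - ξ • (Φ (Tii + Tji) * Sji))
        - (Sji * Φ Tii - ξ • (Φ Tii * Sji)) - (Sji * Φ Tji - ξ • (Φ Tji * Sji)) = 0 := by
      have eA : Sji * Φ (Tii + Tji) - ξ • (Φ (Tii + Tji) * Sji) =
          Φ (Sji * Tii) - (Φ Sji * (Tii + Tji) - ξ • ((Tii + Tji) * Φ Sji)) := by
        rw [hA']; abel
      have eC : Sji * Φ Tji - ξ • (Φ Tji * Sji) =
          -(Φ Sji * Tji - ξ • (Tji * Φ Sji)) :=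
        eq_neg_of_add_eq_zero_right hC'.symm
      rw [eA, eC, hB', hW]
      abel
    have hTS : Sji * T = ξ • (T * Sji) := by
      apply sub_eq_zero.mp
      have expand2 : Sji * T - ξ • (T * Sji) =
          (Sji * Φ (Tii + Tji) - ξ • (Φ (Tii + Tji) * Sji))
            - (Sji * Φ Tii - ξ • (Φ Tii * Sji)) - (Sji * Φ Tji - ξ • (Φ Tji * Sji)) := by
        rw [hTdef]
        simp only [sub_mul, mul_sub, smul_sub]
        abel
      rw [expand2, hfin]
    have h7 : T * Sji = 0 := by
      rw [hSjidef, ← mul_assoc, ← mul_assoc, hTPj, zero_mul, zero_mul]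
    have h8 : Sji * T = (Pj * S) * T := by
      rw [hSjidef, mul_assoc (Pj * S) Pi T, hPiT]
    rw [← h8, hTS, h7, smul_zero]
  have hstar : ∀ S ∈ M, star T * (S * Pj) = 0 := by
    intro S hS
    have h9 := hmain (star S) (star_mem hS)
    have := congrArg star h9
    simpa [star_mul, star_star, hPjsa.star_eq] using this
  have hTstar : star T = 0 := hkill (star T) (star_mem hTmem) hstar
  have hTzero : T = 0 := star_eq_zero.mp hTstar
  rw [hTdef, sub_sub, sub_eq_zero] at hTzero
  exact hTzero

/-- **Claim 4 of Theorem 1.2.** A nonlinear ξ-Lie derivation `Φ` with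
`Φ P₁ = Φ P₂ = 0` is additive on sums `T_{ii} + T_{ij}` and `T_{ii} + T_{ji}`. -/
theorem xiLie_additive_diag_plus_offdiag (M : VonNeumannAlgebra H)
    (hM : VNNoTypeI1 M)
    (P₁ : H →L[ℂ] H) (hproj : VNProjection M P₁)
    (hnt : P₁ ≠ 0 ∧ P₁ ≠ 1) (hcf : VNCoreFree M P₁)
    (hcc : VNCentralCarrier M P₁ 1)
    (ξ : ℂ) (hξ0 : ξ ≠ 0) (hξ1 : ξ ≠ 1)
    (Φ : (H →L[ℂ] H) → (H →L[ℂ] H))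
    (hmaps : ∀ T ∈ M, Φ T ∈ M)
    (hlie : ∀ A ∈ M, ∀ B ∈ M,
      Φ (A * B - ξ • (B * A)) =
        (Φ A * B - ξ • (B * Φ A)) + (A * Φ B - ξ • (Φ B * A)))
    (hP1 : Φ P₁ = 0) (hP2 : Φ (1 - P₁) = 0)
    (Pi Pj : H →L[ℂ] H)
    (hij : (Pi = P₁ ∧ Pj = 1 - P₁) ∨ (Pi = 1 - P₁ ∧ Pj = P₁)) :
    ∀ Tii ∈ M, Pi * Tii * Pi = Tii →
      (∀ Tij ∈ M, Pi * Tij * Pj = Tij → Φ (Tii + Tij) = Φ Tii + Φ Tij) ∧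
      (∀ Tji ∈ M, Pj * Tji * Pi = Tji → Φ (Tii + Tji) = Φ Tii + Φ Tji) := by
  obtain ⟨hP1M, hP1sa, hP1sq⟩ := hproj
  rcases hij with ⟨hPi, hPj⟩ | ⟨hPi, hPj⟩
  · -- Pi = P₁, Pj = 1 - P₁
    rw [hPi, hPj]
    have hPiM : P₁ ∈ M := hP1M
    have hPjM : (1 : H →L[ℂ] H) - P₁ ∈ M := sub_mem (one_mem M) hP1M
    have hsum : P₁ + (1 - P₁) = (1 : H →L[ℂ] H) := by abel
    have hPj2 : ((1 : H →L[ℂ] H) - P₁) * (1 - P₁) = 1 - P₁ := by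
      rw [mul_sub, mul_one, sub_mul, one_mul, hP1sq]
      abel
    have hPjsa : IsSelfAdjoint ((1 : H →L[ℂ] H) - P₁) :=
      (IsSelfAdjoint.one (H →L[ℂ] H)).sub hP1sa
    have hfull : ∀ Q, VNCentralProjection M Q → Q * (1 - P₁) = 1 - P₁ → Q = 1 := by
      intro Q hQ hQPj
      have h1Q : VNCentralProjection M (1 - Q) := by
        refine ⟨⟨sub_mem (one_mem M) hQ.1.1,
          (IsSelfAdjoint.one (H →L[ℂ] H)).sub hQ.1.2.1, ?_⟩, ?_⟩
        · rw [mul_sub, mul_one, sub_mul, one_mul, hQ.1.2.2]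
          abel
        · intro S hS
          rw [sub_mul, one_mul, mul_sub, mul_one, hQ.2 S hS]
      have h2 : Q * P₁ = Q - (1 - P₁) := by
        rw [← hQPj, mul_sub, mul_one]
        abel
      have hle : (1 - Q) * P₁ = 1 - Q := by
        rw [sub_mul, one_mul, h2]
        abel
      have := hcf (1 - Q) h1Q hle
      rw [sub_eq_zero] at this
      exact this.symm
    have hkill : ∀ T ∈ M, (∀ S ∈ M, T * (S * (1 - P₁)) = 0) → T = 0 :=
      fun T hT h => vn_kill M (1 - P₁) T hPjM hT h hfull
    intro Tii hTiiM hTii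
    exact ⟨fun Tij hTijM hTij =>
        vn_auxA M ξ hξ0 hξ1 Φ hmaps hlie P₁ (1 - P₁) hPiM hPjM hsum hPj2 hP2 hkill
          Tii hTiiM hTii Tij hTijM hTij,
      fun Tji hTjiM hTji =>
        vn_auxB M ξ hξ0 hξ1 Φ hmaps hlie P₁ (1 - P₁) hPiM hPjM hsum hPj2 hPjsa hP2 hkill
          Tii hTiiM hTii Tji hTjiM hTji⟩
  · -- Pi = 1 - P₁, Pj = P₁
    rw [hPi, hPj]
    have hPiM : (1 : H →L[ℂ] H) - P₁ ∈ M := sub_mem (one_mem M) hP1M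
    have hsum : (1 : H →L[ℂ] H) - P₁ + P₁ = 1 := by abel
    have hfull : ∀ Q, VNCentralProjection M Q → Q * P₁ = P₁ → Q = 1 := by
      intro Q hQ hQP
      have := hcc.2.2 Q hQ hQP
      rwa [one_mul] at this
    have hkill : ∀ T ∈ M, (∀ S ∈ M, T * (S * P₁) = 0) → T = 0 :=
      fun T hT h => vn_kill M P₁ T hP1M hT h hfull
    intro Tii hTiiM hTii
    exact ⟨fun Tij hTijM hTij =>
        vn_auxA M ξ hξ0 hξ1 Φ hmaps hlie (1 - P₁) P₁ hPiM hP1M hsum hP1sq hP1 hkill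
          Tii hTiiM hTii Tij hTijM hTij,
      fun Tji hTjiM hTji =>
        vn_auxB M ξ hξ0 hξ1 Φ hmaps hlie (1 - P₁) P₁ hPiM hP1M hsum hP1sq hP1sa hP1 hkill
          Tii hTiiM hTii Tji hTjiM hTji⟩
end

section
/- Let M be a von Neumann algebra with no central summands of type I₁, P₁ ∈ M a nontrivial core-free projection with central carrier I, P₂ = I − P₁, and M_{ij} = P_i M P_j for i, j ∈ {1,2}. Let ξ be a complex scalar with ξ ≠ 0 and ξ ≠ 1, and let Φ : M → M be a nonlinear ξ-Lie derivation with Φ(P₁) = Φ(P₂) = 0. Then Φ is additive on the off-diagonal corners: for i ≠ j in {1,2} and all T, S ∈ M_{ij}, Φ(T + S) = Φ(T) + Φ(S). -/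
variable {H : Type*} [NormedAddCommGroup H] [InnerProductSpace ℂ H] [CompleteSpace H]

/-- **Claim 5 of Theorem 1.2.** A nonlinear ξ-Lie derivation `Φ` with
`Φ P₁ = Φ P₂ = 0` is additive on the off-diagonal corners `M_{ij}` (`i ≠ j`). -/
theorem xiLie_additive_on_offdiagonal (M : VonNeumannAlgebra H)
    (hM : VNNoTypeI1 M)
    (P₁ : H →L[ℂ] H) (hproj : VNProjection M P₁)
    (hnt : P₁ ≠ 0 ∧ P₁ ≠ 1) (hcf : VNCoreFree M P₁)
    (hcc : VNCentralCarrier M P₁ 1)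
    (ξ : ℂ) (hξ0 : ξ ≠ 0) (hξ1 : ξ ≠ 1)
    (Φ : (H →L[ℂ] H) → (H →L[ℂ] H))
    (hmaps : ∀ T ∈ M, Φ T ∈ M)
    (hlie : ∀ A ∈ M, ∀ B ∈ M,
      Φ (A * B - ξ • (B * A)) =
        (Φ A * B - ξ • (B * Φ A)) + (A * Φ B - ξ • (Φ B * A)))
    (hP1 : Φ P₁ = 0) (hP2 : Φ (1 - P₁) = 0)
    (Pi Pj : H →L[ℂ] H)
    (hij : (Pi = P₁ ∧ Pj = 1 - P₁) ∨ (Pi = 1 - P₁ ∧ Pj = P₁)) :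
    ∀ T ∈ M, Pi * T * Pj = T → ∀ S ∈ M, Pi * S * Pj = S →
      Φ (T + S) = Φ T + Φ S := by
  intro T hTM hTc S hSM hSc
  -- Facts about the pair of projections (Pi, Pj)
  have hP1sq : P₁ * P₁ = P₁ := hproj.2.2
  obtain ⟨hPiM, hPjM, hPiPi, hPjPj, hPiPj, hPjPi, hΦPi, hΦPj⟩ :
      Pi ∈ M ∧ Pj ∈ M ∧ Pi * Pi = Pi ∧ Pj * Pj = Pj ∧ Pi * Pj = 0 ∧ Pj * Pi = 0 ∧
        Φ Pi = 0 ∧ Φ Pj = 0 := by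
    have h1M : (1 : H →L[ℂ] H) - P₁ ∈ M := sub_mem (one_mem M) hproj.1
    have e1 : P₁ * (1 - P₁) = 0 := by rw [mul_sub, mul_one, hP1sq, sub_self]
    have e2 : (1 - P₁) * P₁ = 0 := by rw [sub_mul, one_mul, hP1sq, sub_self]
    have e3 : (1 - P₁) * (1 - P₁) = 1 - P₁ := by
      rw [sub_mul, one_mul, mul_sub, mul_one, hP1sq]; abel
    rcases hij with ⟨rfl, rfl⟩ | ⟨rfl, rfl⟩
    · exact ⟨hproj.1, h1M, hP1sq, e3, e1, e2, hP1, hP2⟩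
    · exact ⟨h1M, hproj.1, e3, hP1sq, e2, e1, hP2, hP1⟩
  -- Corner relations for T and S
  have hPiT : Pi * T = T := by
    rw [← hTc, ← mul_assoc, ← mul_assoc, hPiPi]
  have hTPj : T * Pj = T := by
    rw [← hTc, mul_assoc, hPjPj]
  have hPjT : Pj * T = 0 := by
    rw [← hPiT, ← mul_assoc, hPjPi, zero_mul]
  have hTPi : T * Pi = 0 := by
    rw [← hTPj, mul_assoc, hPjPi, mul_zero]
  have hPiS : Pi * S = S := by
    rw [← hSc, ← mul_assoc, ← mul_assoc, hPiPi]
  have hSPj : S * Pj = S := by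
    rw [← hSc, mul_assoc, hPjPj]
  have hPjS : Pj * S = 0 := by
    rw [← hPiS, ← mul_assoc, hPjPi, zero_mul]
  have hSPi : S * Pi = 0 := by
    rw [← hSPj, mul_assoc, hPjPi, mul_zero]
  have hTS : T * S = 0 := by rw [← hPiS, ← mul_assoc, hTPi, zero_mul]
  have hST : S * T = 0 := by rw [← hPiT, ← mul_assoc, hSPi, zero_mul]
  have hPiTM : Pi + T ∈ M := add_mem hPiM hTM
  have hPjSM : Pj + S ∈ M := add_mem hPjM hSM
  -- Φ 0 = 0
  have hΦ0 : Φ 0 = 0 := by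
    have := hlie 0 (zero_mem M) 0 (zero_mem M)
    simpa using this
  -- Notation for the images
  set U := Φ (Pi + T) with hU
  set V := Φ (Pj + S) with hV
  set A := Φ T with hA
  set B := Φ S with hB
  -- key1 : Φ (T + S) in terms of U and V
  have key1 : Φ (T + S) = (U * (Pj + S) - ξ • ((Pj + S) * U)) +
      ((Pi + T) * V - ξ • (V * (Pi + T))) := by
    have harg : (Pi + T) * (Pj + S) - ξ • ((Pj + S) * (Pi + T)) = T + S := by
      simp only [mul_add, add_mul, hPiPj, hPiS, hTPj, hTS, hPjPi, hPjT, hSPi, hST]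
      simp
    have h := hlie (Pi + T) hPiTM (Pj + S) hPjSM
    rw [harg] at h
    exact h
  -- key2 : Φ T = U * Pj - ξ • (Pj * U)
  have key2 : A = U * Pj - ξ • (Pj * U) := by
    have harg : (Pi + T) * Pj - ξ • (Pj * (Pi + T)) = T := by
      simp only [add_mul, mul_add, hPiPj, hTPj, hPjPi, hPjT]
      simp
    have h := hlie (Pi + T) hPiTM Pj hPjM
    rw [harg, hΦPj] at h
    simpa using h
  -- key3 : Φ S = Pi * V - ξ • (V * Pi)
  have key3 : B = Pi * V - ξ • (V * Pi) := by
    have harg : Pi * (Pj + S) - ξ • ((Pj + S) * Pi) = S := by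
      simp only [mul_add, add_mul, hPiPj, hPiS, hPjPi, hSPi]
      simp
    have h := hlie Pi hPiM (Pj + S) hPjSM
    rw [harg, hΦPi] at h
    simpa using h
  -- key4 : Φ S via (Pi + T) and S
  have key4 : B = (U * S - ξ • (S * U)) + ((Pi + T) * B - ξ • (B * (Pi + T))) := by
    have harg : (Pi + T) * S - ξ • (S * (Pi + T)) = S := by
      simp only [add_mul, mul_add, hPiS, hTS, hSPi, hST]
      simp
    have h := hlie (Pi + T) hPiTM S hSM
    rw [harg] at h
    exact h
  -- key5 : Φ S via Pi and S
  have key5 : B = Pi * B - ξ • (B * Pi) := by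
    have harg : Pi * S - ξ • (S * Pi) = S := by
      rw [hPiS, hSPi, smul_zero, sub_zero]
    have h := hlie Pi hPiM S hSM
    rw [harg, hΦPi] at h
    simpa using h
  -- key6 : Φ T via T and (Pj + S)
  have key6 : A = (A * (Pj + S) - ξ • ((Pj + S) * A)) + (T * V - ξ • (V * T)) := by
    have harg : T * (Pj + S) - ξ • ((Pj + S) * T) = T := by
      simp only [mul_add, add_mul, hTPj, hTS, hPjT, hST]
      simp
    have h := hlie T hTM (Pj + S) hPjSM
    rw [harg] at h
    exact h
  -- key7 : Φ T via T and Pj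
  have key7 : A = A * Pj - ξ • (Pj * A) := by
    have harg : T * Pj - ξ • (Pj * T) = T := by
      rw [hTPj, hPjT, smul_zero, sub_zero]
    have h := hlie T hTM Pj hPjM
    rw [harg, hΦPj] at h
    simpa using h
  -- key8 : the T,S bracket vanishes
  have key8 : (A * S - ξ • (S * A)) + (T * B - ξ • (B * T)) = 0 := by
    have harg : T * S - ξ • (S * T) = 0 := by
      rw [hTS, hST, smul_zero, sub_zero]
    have h := hlie T hTM S hSM
    rw [harg, hΦ0] at h
    exact h.symm
  -- Derived vanishing relations
  have z1 : (U * S - ξ • (S * U)) + (T * B - ξ • (B * T)) = 0 := by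
    have h := key4
    rw [add_mul, mul_add, smul_add] at h
    have h5 := key5
    calc (U * S - ξ • (S * U)) + (T * B - ξ • (B * T))
        = ((U * S - ξ • (S * U)) + ((Pi * B + T * B) - (ξ • (B * Pi) + ξ • (B * T))))
            - (Pi * B - ξ • (B * Pi)) := by abel
      _ = B - B := by rw [← h, ← h5]
      _ = 0 := sub_self B
  have z2 : (A * S - ξ • (S * A)) + (T * V - ξ • (V * T)) = 0 := by
    have h := key6
    rw [mul_add, add_mul, smul_add] at h
    have h7 := key7
    calc (A * S - ξ • (S * A)) + (T * V - ξ • (V * T))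
        = (((A * Pj + A * S) - (ξ • (Pj * A) + ξ • (S * A))) + (T * V - ξ • (V * T)))
            - (A * Pj - ξ • (Pj * A)) := by abel
      _ = A - A := by rw [← h, ← h7]
      _ = 0 := sub_self A
  -- Assemble
  have expand : Φ (T + S) = A + B +
      ((U * S - ξ • (S * U)) + (T * V - ξ • (V * T))) := by
    rw [key1, key2, key3]
    simp only [mul_add, add_mul, smul_add]
    abel
  have hzero : (U * S - ξ • (S * U)) + (T * V - ξ • (V * T)) = 0 := by
    have : ((U * S - ξ • (S * U)) + (T * B - ξ • (B * T)))
        + ((A * S - ξ • (S * A)) + (T * V - ξ • (V * T)))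
        - ((A * S - ξ • (S * A)) + (T * B - ξ • (B * T)))
        = (U * S - ξ • (S * U)) + (T * V - ξ • (V * T)) := by abel
    rw [← this, z1, z2, key8]
    abel
  rw [expand, hzero, add_zero]
end

section
/- Let M be a von Neumann algebra with no central summands of type I₁, P₁ ∈ M a nontrivial core-free projection with central carrier I, P₂ = I − P₁, and M_{ij} = P_i M P_j for i, j ∈ {1,2}. Let ξ be a complex scalar with ξ ≠ 0 and ξ ≠ 1, and let Φ : M → M be a nonlinear ξ-Lie derivation with Φ(P₁) = Φ(P₂) = 0. Then for all T₁₁ ∈ M₁₁ and T₂₂ ∈ M₂₂, Φ(T₁₁ + T₂₂) = Φ(T₁₁) + Φ(T₂₂). -/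
variable {H : Type*} [NormedAddCommGroup H] [InnerProductSpace ℂ H] [CompleteSpace H]

/-- **Claim 6 of Theorem 1.2.** A nonlinear ξ-Lie derivation `Φ` with
`Φ P₁ = Φ P₂ = 0` is additive on sums `T₁₁ + T₂₂`. -/
theorem xiLie_additive_diagonal_sum (M : VonNeumannAlgebra H)
    (hM : VNNoTypeI1 M)
    (P₁ : H →L[ℂ] H) (hproj : VNProjection M P₁)
    (hnt : P₁ ≠ 0 ∧ P₁ ≠ 1) (hcf : VNCoreFree M P₁)
    (hcc : VNCentralCarrier M P₁ 1)
    (ξ : ℂ) (hξ0 : ξ ≠ 0) (hξ1 : ξ ≠ 1)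
    (Φ : (H →L[ℂ] H) → (H →L[ℂ] H))
    (hmaps : ∀ T ∈ M, Φ T ∈ M)
    (hlie : ∀ A ∈ M, ∀ B ∈ M,
      Φ (A * B - ξ • (B * A)) =
        (Φ A * B - ξ • (B * Φ A)) + (A * Φ B - ξ • (Φ B * A)))
    (hP1 : Φ P₁ = 0) (hP2 : Φ (1 - P₁) = 0) :
    ∀ T₁₁ ∈ M, P₁ * T₁₁ * P₁ = T₁₁ →
      ∀ T₂₂ ∈ M, (1 - P₁) * T₂₂ * (1 - P₁) = T₂₂ →
        Φ (T₁₁ + T₂₂) = Φ T₁₁ + Φ T₂₂ := by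
  intro T₁₁ hm1 h1 T₂₂ hm2 h2
  obtain ⟨hP₁M, -, hidem⟩ := hproj
  set P₂ : H →L[ℂ] H := 1 - P₁ with hP2def
  have hP₂M : P₂ ∈ M := sub_mem (one_mem M) hP₁M
  have hP₁P₂ : P₁ * P₂ = 0 := by rw [hP2def, mul_sub, mul_one, hidem, sub_self]
  have hP₂P₁ : P₂ * P₁ = 0 := by rw [hP2def, sub_mul, one_mul, hidem, sub_self]
  have hidem2 : P₂ * P₂ = P₂ := by
    rw [hP2def, sub_mul, one_mul, mul_sub, mul_one, hidem, sub_self, sub_zero]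
  -- basic multiplication facts
  have e1l : P₁ * T₁₁ = T₁₁ := by
    conv_lhs => rw [← h1, ← mul_assoc, ← mul_assoc, hidem]
    rw [h1]
  have e1r : T₁₁ * P₁ = T₁₁ := by
    conv_lhs => rw [← h1, mul_assoc, hidem]
    rw [h1]
  have e2l : P₂ * T₂₂ = T₂₂ := by
    conv_lhs => rw [← h2, ← mul_assoc, ← mul_assoc, hidem2]
    rw [h2]
  have e2r : T₂₂ * P₂ = T₂₂ := by
    conv_lhs => rw [← h2, mul_assoc, hidem2]
    rw [h2]
  have o12 : P₁ * T₂₂ = 0 := by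
    rw [← e2l, ← mul_assoc, hP₁P₂, zero_mul]
  have o21 : T₂₂ * P₁ = 0 := by
    rw [← e2r, mul_assoc, hP₂P₁, mul_zero]
  have o12' : P₂ * T₁₁ = 0 := by
    rw [← e1l, ← mul_assoc, hP₂P₁, zero_mul]
  have o21' : T₁₁ * P₂ = 0 := by
    rw [← e1r, mul_assoc, hP₁P₂, mul_zero]
  have hTM : T₁₁ + T₂₂ ∈ M := add_mem hm1 hm2
  have hΦ0 : Φ 0 = 0 := by
    have h := hlie 0 (zero_mem M) 0 (zero_mem M)
    simpa using h
  set X := Φ (T₁₁ + T₂₂) with hX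
  set Y := Φ T₁₁ with hY
  set Z := Φ T₂₂ with hZ
  -- six key identities
  have eA : Φ (T₁₁ - ξ • T₁₁) = P₁ * X - ξ • (X * P₁) := by
    have h := hlie P₁ hP₁M (T₁₁ + T₂₂) hTM
    rw [hP1] at h
    simp only [mul_add, add_mul, e1l, e1r, o12, o21, add_zero, zero_mul, mul_zero,
      smul_zero, sub_zero, zero_add, ← hX] at h
    exact h
  have eB : Φ (T₁₁ - ξ • T₁₁) = P₁ * Y - ξ • (Y * P₁) := by
    have h := hlie P₁ hP₁M T₁₁ hm1
    rw [hP1] at h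
    simp only [e1l, e1r, zero_mul, mul_zero, smul_zero, sub_zero, zero_add, ← hY] at h
    exact h
  have eC : P₁ * Z - ξ • (Z * P₁) = 0 := by
    have h := hlie P₁ hP₁M T₂₂ hm2
    rw [hP1] at h
    simp only [o12, o21, zero_mul, mul_zero, smul_zero, sub_zero, zero_add, sub_self,
      hΦ0, ← hZ] at h
    exact h.symm
  have eA' : Φ (T₂₂ - ξ • T₂₂) = P₂ * X - ξ • (X * P₂) := by
    have h := hlie P₂ hP₂M (T₁₁ + T₂₂) hTM
    rw [hP2] at h
    simp only [mul_add, add_mul, e2l, e2r, o12', o21', zero_add, add_zero, zero_mul,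
      mul_zero, smul_zero, sub_zero, ← hX] at h
    exact h
  have eB' : Φ (T₂₂ - ξ • T₂₂) = P₂ * Z - ξ • (Z * P₂) := by
    have h := hlie P₂ hP₂M T₂₂ hm2
    rw [hP2] at h
    simp only [e2l, e2r, zero_mul, mul_zero, smul_zero, sub_zero, zero_add, ← hZ] at h
    exact h
  have eC' : P₂ * Y - ξ • (Y * P₂) = 0 := by
    have h := hlie P₂ hP₂M T₁₁ hm1
    rw [hP2] at h
    simp only [o12', o21', zero_mul, mul_zero, smul_zero, sub_zero, zero_add, sub_self,
      hΦ0, ← hY] at h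
    exact h.symm
  have hsum : P₁ + P₂ = 1 := by rw [hP2def]; abel
  have key : X - ξ • X = (Y + Z) - ξ • (Y + Z) := by
    calc X - ξ • X = (P₁ + P₂) * X - ξ • (X * (P₁ + P₂)) := by
          rw [hsum, one_mul, mul_one]
      _ = (P₁ * X - ξ • (X * P₁)) + (P₂ * X - ξ • (X * P₂)) := by
          rw [add_mul, mul_add, smul_add]; abel
      _ = (P₁ * Y - ξ • (Y * P₁)) + (P₂ * Z - ξ • (Z * P₂)) := by
          rw [← eA, ← eA', eB, eB']
      _ = ((P₁ * Y - ξ • (Y * P₁)) + (P₂ * Y - ξ • (Y * P₂)))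
            + ((P₁ * Z - ξ • (Z * P₁)) + (P₂ * Z - ξ • (Z * P₂))) := by
          rw [eC, eC']; abel
      _ = ((P₁ + P₂) * Y - ξ • (Y * (P₁ + P₂)))
            + ((P₁ + P₂) * Z - ξ • (Z * (P₁ + P₂))) := by
          rw [add_mul, add_mul, mul_add, mul_add, smul_add, smul_add]; abel
      _ = (Y + Z) - ξ • (Y + Z) := by
          rw [hsum, one_mul, one_mul, mul_one, mul_one, smul_add]; abel
  have hne : (1 : ℂ) - ξ ≠ 0 := sub_ne_zero.mpr (Ne.symm hξ1)
  have hzero : (1 - ξ) • (X - (Y + Z)) = 0 := by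
    have k : X - ξ • X - ((Y + Z) - ξ • (Y + Z)) = 0 := sub_eq_zero.mpr key
    calc (1 - ξ) • (X - (Y + Z)) = X - ξ • X - ((Y + Z) - ξ • (Y + Z)) := by
          rw [sub_smul, one_smul, smul_sub]; abel
      _ = 0 := k
  have : X - (Y + Z) = 0 := by
    rcases smul_eq_zero.mp hzero with h | h
    · exact absurd h hne
    · exact h
  have := sub_eq_zero.mp this
  simpa [hX, hY, hZ] using this
end

section
/- Let M be a von Neumann algebra with no central summands of type I₁, P₁ ∈ M a nontrivial core-free projection with central carrier I, P₂ = I − P₁, and M_{ij} = P_i M P_j for i, j ∈ {1,2}. Let ξ be a complex scalar with ξ ≠ 0 and ξ ≠ 1, and let Φ : M → M be a nonlinear ξ-Lie derivation with Φ(P₁) = Φ(P₂) = 0. Then Φ is additive on the diagonal corners: for i ∈ {1,2} and all T, S ∈ M_{ii}, Φ(T + S) = Φ(T) + Φ(S). -/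
variable {H : Type*} [NormedAddCommGroup H] [InnerProductSpace ℂ H] [CompleteSpace H]

section Auxiliary

set_option linter.unusedSectionVars false
set_option maxHeartbeats 1000000

private lemma mapsTo_closure' (s : Set H) (K' : Submodule ℂ H) (hK' : IsClosed (K' : Set H))
    (T : H →L[ℂ] H) (h : ∀ y ∈ s, T y ∈ K') :
    ∀ x ∈ (Submodule.span ℂ s).topologicalClosure, T x ∈ K' := by
  have h1 : Submodule.span ℂ s ≤ K'.comap (T : H →ₗ[ℂ] H) := Submodule.span_le.mpr h
  have h2 : IsClosed ((K'.comap (T : H →ₗ[ℂ] H) : Submodule ℂ H) : Set H) := by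
    have : ((K'.comap (T : H →ₗ[ℂ] H) : Submodule ℂ H) : Set H) = T ⁻¹' K' := rfl
    rw [this]
    exact hK'.preimage T.continuous
  intro x hx
  exact (Submodule.topologicalClosure_minimal _ h1 h2) hx

private lemma proj_comm (K : Submodule ℂ H) [K.HasOrthogonalProjection]
    (T : H →L[ℂ] H)
    (hT : ∀ x ∈ K, T x ∈ K) (hT' : ∀ x ∈ K, (ContinuousLinearMap.adjoint T) x ∈ K) :
    T * (K.subtypeL ∘L K.orthogonalProjectionOnto) = (K.subtypeL ∘L K.orthogonalProjectionOnto) * T := by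
  set Z := K.subtypeL ∘L K.orthogonalProjectionOnto with hZdef
  have hZapp : ∀ x : H, Z x = (K.orthogonalProjectionOnto x : H) := fun x => rfl
  have hfix : ∀ y ∈ K, Z y = y := by
    intro y hy; rw [hZapp]; exact Submodule.starProjection_eq_self_iff.mpr hy
  have hZmem : ∀ x : H, Z x ∈ K := fun x => (K.orthogonalProjectionOnto x).2
  have hperp : ∀ y ∈ Kᗮ, Z y = 0 := by
    intro y hy; rw [hZapp]
    rw [Submodule.orthogonalProjectionOnto_apply_of_mem_orthogonal hy]
    simp
  ext x
  have hx : x - Z x ∈ Kᗮ := K.sub_starProjection_mem_orthogonal x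
  have hTperp : T (x - Z x) ∈ Kᗮ := by
    rw [Submodule.mem_orthogonal]
    intro u hu
    rw [← ContinuousLinearMap.adjoint_inner_left T (x - Z x) u]
    exact hx _ (hT' u hu)
  have key : Z (T x) = T (Z x) := by
    have e : T x = T (Z x) + T (x - Z x) := by rw [← map_add]; congr 1; abel
    rw [e, map_add, hfix _ (hT _ (hZmem x)), hperp _ hTperp, add_zero]
  simpa [ContinuousLinearMap.mul_apply] using key.symm

private lemma right_ann (M : VonNeumannAlgebra H) (P : H →L[ℂ] H) (hPM : P ∈ M)
    (hcar : ∀ Q, VNCentralProjection M Q → Q * P = P → Q = 1) :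
    ∀ A : H →L[ℂ] H, (∀ X ∈ M, A * X * P = 0) → A = 0 := by
  intro A hA
  set s : Set H := {y | ∃ X ∈ M, ∃ h : H, (X * P) h = y} with hs
  set K := (Submodule.span ℂ s).topologicalClosure with hKdef
  have hKclosed : IsClosed (K : Set H) := Submodule.isClosed_topologicalClosure _
  haveI : CompleteSpace K := hKclosed.completeSpace_coe
  set Z := K.subtypeL ∘L K.orthogonalProjectionOnto with hZdef
  have hZsa : IsSelfAdjoint Z := isSelfAdjoint_starProjection K
  have hZapp : ∀ x : H, Z x = (K.orthogonalProjectionOnto x : H) := fun x => rfl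
  have hfix : ∀ y ∈ K, Z y = y := by
    intro y hy; rw [hZapp]; exact Submodule.starProjection_eq_self_iff.mpr hy
  have hZmem : ∀ x : H, Z x ∈ K := fun x => (K.orthogonalProjectionOnto x).2
  have hsubK : ∀ y ∈ s, y ∈ K :=
    fun y hy => Submodule.le_topologicalClosure _ (Submodule.subset_span hy)
  -- invariance of K under operators preserving the generating set
  have hinv : ∀ T : H →L[ℂ] H, (∀ y ∈ s, T y ∈ K) → ∀ x ∈ K, T x ∈ K :=
    fun T h => mapsTo_closure' s K hKclosed T h
  -- members of M preserve s
  have hMs : ∀ T ∈ M, ∀ y ∈ s, T y ∈ K := by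
    rintro T hT y ⟨X, hX, h, rfl⟩
    refine hsubK _ ⟨T * X, mul_mem hT hX, h, ?_⟩
    simp [ContinuousLinearMap.mul_apply]
  -- members of the commutant preserve s
  have hCs : ∀ T ∈ Set.centralizer (M : Set (H →L[ℂ] H)), ∀ y ∈ s, T y ∈ K := by
    rintro T hT y ⟨X, hX, h, rfl⟩
    have hcomm : (X * P) * T = T * (X * P) := hT (X * P) (mul_mem hX hPM)
    refine hsubK _ ⟨X, hX, T h, ?_⟩
    have := congrArg (fun (S : H →L[ℂ] H) => S h) hcomm
    simpa [ContinuousLinearMap.mul_apply] using this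
  -- star-closedness of the commutant
  have hCstar : ∀ T ∈ Set.centralizer (M : Set (H →L[ℂ] H)),
      star T ∈ Set.centralizer (M : Set (H →L[ℂ] H)) := by
    intro T hT m hm
    have h1 : star m * T = T * star m := hT (star m) (star_mem hm)
    have := congrArg star h1
    simpa [star_mul] using this.symm
  -- Z commutes with the commutant, hence Z ∈ M
  have hZM : Z ∈ M := by
    have hz : Z ∈ Set.centralizer (Set.centralizer (M : Set (H →L[ℂ] H))) := by
      intro T hT
      have hadj : ∀ x ∈ K, (ContinuousLinearMap.adjoint T) x ∈ K := by
        intro x hx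
        have : star T ∈ Set.centralizer (M : Set (H →L[ℂ] H)) := hCstar T hT
        rw [← ContinuousLinearMap.star_eq_adjoint]
        exact hinv (star T) (hCs _ this) x hx
      exact proj_comm K T (hinv T (hCs T hT)) hadj
    have := M.centralizer_centralizer
    rw [← SetLike.mem_coe, ← this]
    exact hz
  -- Z commutes with M
  have hZC : ∀ T ∈ M, Z * T = T * Z := by
    intro T hT
    have hadj : ∀ x ∈ K, (ContinuousLinearMap.adjoint T) x ∈ K := by
      intro x hx
      rw [← ContinuousLinearMap.star_eq_adjoint]
      exact hinv (star T) (hMs _ (star_mem hT)) x hx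
    exact (proj_comm K T (hinv T (hMs T hT)) hadj).symm
  -- Z is an idempotent
  have hZZ : Z * Z = Z := by
    ext x
    have : Z (Z x) = Z x := hfix _ (hZmem x)
    simpa [ContinuousLinearMap.mul_apply] using this
  -- Z * P = P
  have hZP : Z * P = P := by
    ext x
    have hPx : P x ∈ K := hsubK _ ⟨1, one_mem M, x, by simp⟩
    simpa [ContinuousLinearMap.mul_apply] using hfix _ hPx
  -- A vanishes on K
  have hAK : ∀ x ∈ K, A x ∈ (⊥ : Submodule ℂ H) := by
    refine mapsTo_closure' s ⊥ (by rw [Submodule.bot_coe]; exact isClosed_singleton) A ?_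
    rintro y ⟨X, hX, h, rfl⟩
    have h0 := hA X hX
    have := congrArg (fun (S : H →L[ℂ] H) => S h) h0
    simpa [ContinuousLinearMap.mul_apply] using this
  have hZ1 : Z = 1 := hcar Z ⟨⟨hZM, hZsa, hZZ⟩, hZC⟩ hZP
  ext x
  have : A (Z x) ∈ (⊥ : Submodule ℂ H) := hAK _ (hZmem x)
  rw [hZ1] at this
  simpa using this

private lemma left_ann (M : VonNeumannAlgebra H) (P : H →L[ℂ] H) (hPsa : star P = P)
    (R : ∀ A : H →L[ℂ] H, (∀ X ∈ M, A * X * P = 0) → A = 0) :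
    ∀ B : H →L[ℂ] H, (∀ X ∈ M, P * X * B = 0) → B = 0 := by
  intro B hB
  have hsB : star B = 0 := by
    refine R (star B) fun X hX => ?_
    have h := hB (star X) (star_mem hX)
    have : star (P * star X * B) = star B * X * P := by
      simp [star_mul, hPsa, mul_assoc]
    rw [← this, h, star_zero]
  have := congrArg star hsB
  simpa using this

private lemma quash (ξ : ℂ) (hξ : ξ - ξ * ξ ≠ 0) (Q W : H →L[ℂ] H) (hQQ : Q * Q = Q)
    (h : W * Q = ξ • (Q * W)) : Q * W = 0 ∧ W * Q = 0 := by
  have h1 : Q * W * Q = ξ • (Q * W) := by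
    have h' := congrArg (fun Y => Q * Y) h
    simp only [mul_smul_comm] at h'
    rw [← mul_assoc Q W Q, ← mul_assoc Q Q W, hQQ] at h'
    exact h'
  have h2 : W * Q = ξ • (Q * W * Q) := by
    have h' := congrArg (fun Y => Y * Q) h
    simp only [smul_mul_assoc] at h'
    rw [mul_assoc W Q Q, hQQ] at h'
    exact h'
  have h3 : ξ • (Q * W) = (ξ * ξ) • (Q * W) := by
    rw [← h, h2, h1, smul_smul]
  have h4 : Q * W = 0 := by
    have h5 : (ξ - ξ * ξ) • (Q * W) = 0 := by rw [sub_smul, h3, sub_self]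
    have h6 := congrArg (fun y => (ξ - ξ * ξ)⁻¹ • y) h5
    simpa [smul_smul, inv_mul_cancel₀ hξ] using h6
  exact ⟨h4, by rw [h, h4, smul_zero]⟩

private lemma diag_core (M : VonNeumannAlgebra H)
    (ξ : ℂ) (hξ0 : ξ ≠ 0) (hξ1 : ξ ≠ 1)
    (P Q : H →L[ℂ] H) (hPM : P ∈ M) (hQM : Q ∈ M)
    (hPP : P * P = P) (hQQ : Q * Q = Q) (hPQ : P * Q = 0) (hQP : Q * P = 0)
    (hPQ1 : P + Q = 1)
    (Φ : (H →L[ℂ] H) → (H →L[ℂ] H))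
    (hlie : ∀ A ∈ M, ∀ B ∈ M,
      Φ (A * B - ξ • (B * A)) =
        (Φ A * B - ξ • (B * Φ A)) + (A * Φ B - ξ • (Φ B * A)))
    (hΦP : Φ P = 0) (hΦQ : Φ Q = 0)
    (RQ : ∀ A : H →L[ℂ] H, (∀ X ∈ M, A * X * Q = 0) → A = 0)
    (LP : ∀ B : H →L[ℂ] H, (∀ X ∈ M, P * X * B = 0) → B = 0) :
    ∀ T ∈ M, P * T * P = T → ∀ S ∈ M, P * S * P = S → Φ (T + S) = Φ T + Φ S := by
  have hξξ : ξ - ξ * ξ ≠ 0 := by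
    intro hc
    have h' : ξ * (1 - ξ) = ξ - ξ * ξ := by ring
    rcases mul_eq_zero.mp (h'.trans hc) with h | h
    · exact hξ0 h
    · exact hξ1 (sub_eq_zero.mp h).symm
  have hΦ0 : Φ 0 = 0 := by
    have h := hlie 0 (zero_mem M) 0 (zero_mem M)
    simpa using h
  -- corner facts
  have mulPQ : ∀ C : H →L[ℂ] H, P * C * Q = C →
      P * C = C ∧ C * Q = C ∧ Q * C = 0 ∧ C * P = 0 := by
    intro C hC
    refine ⟨?_, ?_, ?_, ?_⟩
    · rw [← hC]; simp only [← mul_assoc]; rw [hPP]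
    · rw [← hC, mul_assoc (P * C) Q Q, hQQ]
    · rw [← hC]; simp only [← mul_assoc]; rw [hQP, zero_mul, zero_mul]
    · rw [← hC, mul_assoc (P * C) Q P, hQP, mul_zero]
  have mulPP : ∀ T : H →L[ℂ] H, P * T * P = T →
      P * T = T ∧ T * P = T ∧ T * Q = 0 ∧ Q * T = 0 := by
    intro T hT
    refine ⟨?_, ?_, ?_, ?_⟩
    · rw [← hT]; simp only [← mul_assoc]; rw [hPP]
    · rw [← hT, mul_assoc (P * T) P P, hPP]
    · rw [← hT, mul_assoc (P * T) P Q, hPQ, mul_zero]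
    · rw [← hT]; simp only [← mul_assoc]; rw [hQP, zero_mul, zero_mul]
  have mulQQ : ∀ T : H →L[ℂ] H, Q * T * Q = T →
      Q * T = T ∧ T * Q = T ∧ T * P = 0 ∧ P * T = 0 := by
    intro T hT
    refine ⟨?_, ?_, ?_, ?_⟩
    · rw [← hT]; simp only [← mul_assoc]; rw [hQQ]
    · rw [← hT, mul_assoc (Q * T) Q Q, hQQ]
    · rw [← hT, mul_assoc (Q * T) Q P, hQP, mul_zero]
    · rw [← hT]; simp only [← mul_assoc]; rw [hPQ, zero_mul, zero_mul]
  -- basic bracket with Q for diagonal (P-side) elements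
  have bQ : ∀ A, A ∈ M → P * A * P = A → Φ A * Q - ξ • (Q * Φ A) = 0 := by
    intro A hAM hA
    obtain ⟨hPA, hAP, hAQ, hQA⟩ := mulPP A hA
    have h := hlie A hAM Q hQM
    rw [hAQ, hQA, hΦQ] at h
    simp only [smul_zero, sub_zero, mul_zero, zero_mul, add_zero] at h
    rw [hΦ0] at h
    exact h.symm
  -- basic bracket with P for Q-side diagonal elements
  have bP : ∀ A, A ∈ M → Q * A * Q = A → Φ A * P - ξ • (P * Φ A) = 0 := by
    intro A hAM hA
    obtain ⟨hQA, hAQ, hAP, hPA⟩ := mulQQ A hA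
    have h := hlie A hAM P hPM
    rw [hAP, hPA, hΦP] at h
    simp only [smul_zero, sub_zero, mul_zero, zero_mul, add_zero] at h
    rw [hΦ0] at h
    exact h.symm
  -- Claim B : additivity of diagonal (P-side) + corner PQ
  have claimB : ∀ T, T ∈ M → P * T * P = T → ∀ C, C ∈ M → P * C * Q = C →
      Φ (T + C) = Φ T + Φ C := by
    intro T hTM hT C hCM hC
    obtain ⟨hPT, hTP, hTQ, hQT⟩ := mulPP T hT
    obtain ⟨hPC, hCQ, hQC, hCP⟩ := mulPQ C hC
    have hTCM : T + C ∈ M := add_mem hTM hCM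
    have eT := bQ T hTM hT
    have eC : Φ C * Q - ξ • (Q * Φ C) = Φ C := by
      have h := hlie C hCM Q hQM
      rw [hCQ, hQC, hΦQ] at h
      simp only [smul_zero, sub_zero, mul_zero, zero_mul, add_zero] at h
      exact h.symm
    have eTC : Φ (T + C) * Q - ξ • (Q * Φ (T + C)) = Φ C := by
      have h := hlie (T + C) hTCM Q hQM
      rw [add_mul T C Q, hTQ, hCQ, zero_add, mul_add Q T C, hQT, hQC, add_zero, hΦQ] at h
      simp only [smul_zero, sub_zero, mul_zero, zero_mul, add_zero] at h
      exact h.symm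
    set W := Φ (T + C) - Φ T - Φ C with hWdef
    have hWQ : W * Q = ξ • (Q * W) := by
      have expand : W * Q - ξ • (Q * W)
          = (Φ (T + C) * Q - ξ • (Q * Φ (T + C))) - (Φ T * Q - ξ • (Q * Φ T))
            - (Φ C * Q - ξ • (Q * Φ C)) := by
        rw [hWdef]; simp only [sub_mul, mul_sub, smul_sub]; abel
      rw [eTC, eT, eC] at expand
      have h0 : W * Q - ξ • (Q * W) = 0 := by rw [expand]; abel
      exact sub_eq_zero.mp h0
    obtain ⟨hQW, hWQ0⟩ := quash ξ hξξ Q W hQQ hWQ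
    have hWP : W * P = W := by
      have h1 : W * (P + Q) = W := by rw [hPQ1, mul_one]
      rw [mul_add, hWQ0, add_zero] at h1
      exact h1
    have hWann : ∀ X, X ∈ M → W * X * Q = 0 := by
      intro X hX
      have hDM : P * X * Q ∈ M := mul_mem (mul_mem hPM hX) hQM
      have hDcorner : P * (P * X * Q) * Q = P * X * Q := by
        simp only [← mul_assoc]; rw [hPP, mul_assoc (P * X) Q Q, hQQ]
      obtain ⟨hPD, hDQ, hQD, hDP⟩ := mulPQ (P * X * Q) hDcorner
      have hDT : (P * X * Q) * T = 0 := by rw [mul_assoc (P * X) Q T, hQT, mul_zero]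
      have hCD : C * (P * X * Q) = 0 := by
        simp only [← mul_assoc]; rw [hCP, zero_mul, zero_mul]
      have hDC : (P * X * Q) * C = 0 := by rw [mul_assoc (P * X) Q C, hQC, mul_zero]
      have eTD : Φ (T * (P * X * Q)) = Φ T * (P * X * Q) - ξ • ((P * X * Q) * Φ T)
          + (T * Φ (P * X * Q) - ξ • (Φ (P * X * Q) * T)) := by
        have h := hlie T hTM (P * X * Q) hDM
        rw [hDT] at h
        simpa only [smul_zero, sub_zero] using h
      have eCD : Φ C * (P * X * Q) - ξ • ((P * X * Q) * Φ C)
          + (C * Φ (P * X * Q) - ξ • (Φ (P * X * Q) * C)) = 0 := by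
        have h := hlie C hCM (P * X * Q) hDM
        rw [hCD, hDC] at h
        simp only [smul_zero, sub_zero] at h
        rw [hΦ0] at h
        exact h.symm
      have eTCD : Φ (T * (P * X * Q)) = Φ (T + C) * (P * X * Q) - ξ • ((P * X * Q) * Φ (T + C))
          + ((T + C) * Φ (P * X * Q) - ξ • (Φ (P * X * Q) * (T + C))) := by
        have h := hlie (T + C) hTCM (P * X * Q) hDM
        rw [add_mul T C (P * X * Q), hCD, add_zero, mul_add (P * X * Q) T C, hDT, hDC,
          add_zero] at h
        simpa only [smul_zero, sub_zero] using h
      have expand : W * (P * X * Q) - ξ • ((P * X * Q) * W)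
          = (Φ (T + C) * (P * X * Q) - ξ • ((P * X * Q) * Φ (T + C))
              + ((T + C) * Φ (P * X * Q) - ξ • (Φ (P * X * Q) * (T + C))))
            - (Φ T * (P * X * Q) - ξ • ((P * X * Q) * Φ T)
              + (T * Φ (P * X * Q) - ξ • (Φ (P * X * Q) * T)))
            - (Φ C * (P * X * Q) - ξ • ((P * X * Q) * Φ C)
              + (C * Φ (P * X * Q) - ξ • (Φ (P * X * Q) * C))) := by
        rw [hWdef]
        simp only [sub_mul, mul_sub, smul_sub, add_mul, mul_add, smul_add]
        abel
      rw [← eTCD, ← eTD, eCD] at expand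
      have h0 : W * (P * X * Q) - ξ • ((P * X * Q) * W) = 0 := by rw [expand]; abel
      have hDW : (P * X * Q) * W = 0 := by rw [mul_assoc (P * X) Q W, hQW, mul_zero]
      rw [hDW, smul_zero, sub_zero] at h0
      calc W * X * Q = W * (P * X * Q) := by
            simp only [← mul_assoc]; rw [hWP]
        _ = 0 := h0
    have hW0 : W = 0 := RQ W hWann
    rw [hWdef] at hW0
    rw [sub_sub] at hW0
    exact sub_eq_zero.mp hW0
  -- Claim B' : additivity of diagonal (Q-side) + corner PQ
  have claimB' : ∀ T, T ∈ M → Q * T * Q = T → ∀ C, C ∈ M → P * C * Q = C →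
      Φ (T + C) = Φ T + Φ C := by
    intro T hTM hT C hCM hC
    obtain ⟨hQT, hTQ, hTP, hPT⟩ := mulQQ T hT
    obtain ⟨hPC, hCQ, hQC, hCP⟩ := mulPQ C hC
    have hTCM : T + C ∈ M := add_mem hTM hCM
    have eT := bP T hTM hT
    have eC : Φ C * P - ξ • (P * Φ C) = Φ (0 - ξ • C) := by
      have h := hlie C hCM P hPM
      rw [hCP, hPC, hΦP] at h
      simp only [mul_zero, zero_mul, smul_zero, sub_zero, add_zero] at h
      exact h.symm
    have eTC : Φ (T + C) * P - ξ • (P * Φ (T + C)) = Φ (0 - ξ • C) := by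
      have h := hlie (T + C) hTCM P hPM
      rw [add_mul T C P, hTP, hCP, add_zero, mul_add P T C, hPT, hPC, zero_add, hΦP] at h
      simp only [mul_zero, zero_mul, smul_zero, sub_zero, add_zero] at h
      exact h.symm
    set W := Φ (T + C) - Φ T - Φ C with hWdef
    have hWP : W * P = ξ • (P * W) := by
      have expand : W * P - ξ • (P * W)
          = (Φ (T + C) * P - ξ • (P * Φ (T + C))) - (Φ T * P - ξ • (P * Φ T))
            - (Φ C * P - ξ • (P * Φ C)) := by
        rw [hWdef]; simp only [sub_mul, mul_sub, smul_sub]; abel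
      rw [eTC, eT, eC] at expand
      have h0 : W * P - ξ • (P * W) = 0 := by rw [expand]; abel
      exact sub_eq_zero.mp h0
    obtain ⟨hPW, hWP0⟩ := quash ξ hξξ P W hPP hWP
    have hQWW : Q * W = W := by
      have h1 : (P + Q) * W = W := by rw [hPQ1, one_mul]
      rw [add_mul, hPW, zero_add] at h1
      exact h1
    have hWann : ∀ X, X ∈ M → P * X * W = 0 := by
      intro X hX
      have hDM : P * X * Q ∈ M := mul_mem (mul_mem hPM hX) hQM
      have hDcorner : P * (P * X * Q) * Q = P * X * Q := by
        simp only [← mul_assoc]; rw [hPP, mul_assoc (P * X) Q Q, hQQ]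
      obtain ⟨hPD, hDQ, hQD, hDP⟩ := mulPQ (P * X * Q) hDcorner
      have hTD : T * (P * X * Q) = 0 := by
        simp only [← mul_assoc]; rw [hTP, zero_mul, zero_mul]
      have hCD : C * (P * X * Q) = 0 := by
        simp only [← mul_assoc]; rw [hCP, zero_mul, zero_mul]
      have hDC : (P * X * Q) * C = 0 := by rw [mul_assoc (P * X) Q C, hQC, mul_zero]
      have eDT : Φ ((P * X * Q) * T) = Φ (P * X * Q) * T - ξ • (T * Φ (P * X * Q))
          + ((P * X * Q) * Φ T - ξ • (Φ T * (P * X * Q))) := by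
        have h := hlie (P * X * Q) hDM T hTM
        rw [hTD] at h
        simpa only [smul_zero, sub_zero] using h
      have eDC : Φ (P * X * Q) * C - ξ • (C * Φ (P * X * Q))
          + ((P * X * Q) * Φ C - ξ • (Φ C * (P * X * Q))) = 0 := by
        have h := hlie (P * X * Q) hDM C hCM
        rw [hDC, hCD] at h
        simp only [smul_zero, sub_zero] at h
        rw [hΦ0] at h
        exact h.symm
      have eDTC : Φ ((P * X * Q) * T) = Φ (P * X * Q) * (T + C) - ξ • ((T + C) * Φ (P * X * Q))
          + ((P * X * Q) * Φ (T + C) - ξ • (Φ (T + C) * (P * X * Q))) := by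
        have h := hlie (P * X * Q) hDM (T + C) hTCM
        rw [mul_add (P * X * Q) T C, hDC, add_zero, add_mul T C (P * X * Q), hTD, hCD,
          add_zero] at h
        simpa only [smul_zero, sub_zero] using h
      have expand : (P * X * Q) * W - ξ • (W * (P * X * Q))
          = (Φ (P * X * Q) * (T + C) - ξ • ((T + C) * Φ (P * X * Q))
              + ((P * X * Q) * Φ (T + C) - ξ • (Φ (T + C) * (P * X * Q))))
            - (Φ (P * X * Q) * T - ξ • (T * Φ (P * X * Q))
              + ((P * X * Q) * Φ T - ξ • (Φ T * (P * X * Q))))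
            - (Φ (P * X * Q) * C - ξ • (C * Φ (P * X * Q))
              + ((P * X * Q) * Φ C - ξ • (Φ C * (P * X * Q)))) := by
        rw [hWdef]
        simp only [sub_mul, mul_sub, smul_sub, add_mul, mul_add, smul_add]
        abel
      rw [← eDTC, ← eDT, eDC] at expand
      have h0 : (P * X * Q) * W - ξ • (W * (P * X * Q)) = 0 := by rw [expand]; abel
      have hWD : W * (P * X * Q) = 0 := by
        simp only [← mul_assoc]; rw [hWP0, zero_mul, zero_mul]
      rw [hWD, smul_zero, sub_zero] at h0
      calc P * X * W = (P * X * Q) * W := by rw [mul_assoc (P * X) Q W, hQWW]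
        _ = 0 := h0
    have hW0 : W = 0 := LP W hWann
    rw [hWdef] at hW0
    rw [sub_sub] at hW0
    exact sub_eq_zero.mp hW0
  -- Claim C : additivity on the PQ corner
  have claimC : ∀ C, C ∈ M → P * C * Q = C → ∀ D, D ∈ M → P * D * Q = D →
      Φ (C + D) = Φ C + Φ D := by
    intro C hCM hC D hDM hD
    obtain ⟨hPC, hCQ, hQC, hCP⟩ := mulPQ C hC
    obtain ⟨hPD, hDQ, hQD, hDP⟩ := mulPQ D hD
    have hCD : C * D = 0 := by
      rw [← hD]; simp only [← mul_assoc]; rw [hCP, zero_mul, zero_mul]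
    have hDC : D * C = 0 := by
      rw [← hC]; simp only [← mul_assoc]; rw [hDP, zero_mul, zero_mul]
    have hPPP : P * P * P = P := by rw [hPP, hPP]
    have hQQQ : Q * Q * Q = Q := by rw [hQQ, hQQ]
    have e1 : Φ (P + C) = Φ C := by
      have h := claimB P hPM hPPP C hCM hC
      rw [hΦP, zero_add] at h
      exact h
    have e2 : Φ (Q + D) = Φ D := by
      have h := claimB' Q hQM hQQQ D hDM hD
      rw [hΦQ, zero_add] at h
      exact h
    have hmain := hlie (P + C) (add_mem hPM hCM) (Q + D) (add_mem hQM hDM)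
    have hb1 : (P + C) * (Q + D) = C + D := by
      rw [add_mul, mul_add, mul_add, hPQ, hPD, hCQ, hCD, zero_add, add_zero]
      abel
    have hb2 : (Q + D) * (P + C) = 0 := by
      rw [add_mul, mul_add, mul_add, hQP, hQC, hDP, hDC]
      simp
    rw [hb1, hb2, smul_zero, sub_zero, e1, e2] at hmain
    have eC : Φ C * Q - ξ • (Q * Φ C) = Φ C := by
      have h := hlie C hCM Q hQM
      rw [hCQ, hQC, hΦQ] at h
      simp only [smul_zero, sub_zero, mul_zero, zero_mul, add_zero] at h
      exact h.symm
    have eD : P * Φ D - ξ • (Φ D * P) = Φ D := by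
      have h := hlie P hPM D hDM
      rw [hPD, hDP, hΦP] at h
      simp only [smul_zero, sub_zero, mul_zero, zero_mul, zero_add, zero_sub, neg_zero] at h
      exact h.symm
    have eCD0 : Φ C * D - ξ • (D * Φ C) + (C * Φ D - ξ • (Φ D * C)) = 0 := by
      have h := hlie C hCM D hDM
      rw [hCD, hDC] at h
      simp only [smul_zero, sub_zero] at h
      rw [hΦ0] at h
      exact h.symm
    have expand : Φ C * (Q + D) - ξ • ((Q + D) * Φ C) + ((P + C) * Φ D - ξ • (Φ D * (P + C)))
        = (Φ C * Q - ξ • (Q * Φ C)) + (P * Φ D - ξ • (Φ D * P))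
          + (Φ C * D - ξ • (D * Φ C) + (C * Φ D - ξ • (Φ D * C))) := by
      simp only [mul_add, add_mul, smul_add]
      abel
    rw [expand, eC, eD, eCD0, add_zero] at hmain
    exact hmain
  -- Final: additivity on the PP diagonal
  intro T hTM hT S hSM hS
  obtain ⟨hPT, hTP, hTQ, hQT⟩ := mulPP T hT
  obtain ⟨hPS, hSP, hSQ, hQS⟩ := mulPP S hS
  have hTSM : T + S ∈ M := add_mem hTM hSM
  have hTS : P * (T + S) * P = T + S := by
    rw [mul_add P T S, add_mul (P * T) (P * S) P, hT, hS]
  have eT := bQ T hTM hT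
  have eS := bQ S hSM hS
  have eTS := bQ (T + S) hTSM hTS
  set W := Φ (T + S) - Φ T - Φ S with hWdef
  have hWQ : W * Q = ξ • (Q * W) := by
    have expand : W * Q - ξ • (Q * W)
        = (Φ (T + S) * Q - ξ • (Q * Φ (T + S))) - (Φ T * Q - ξ • (Q * Φ T))
          - (Φ S * Q - ξ • (Q * Φ S)) := by
      rw [hWdef]; simp only [sub_mul, mul_sub, smul_sub]; abel
    rw [eTS, eT, eS] at expand
    have h0 : W * Q - ξ • (Q * W) = 0 := by rw [expand]; abel
    exact sub_eq_zero.mp h0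
  obtain ⟨hQW, hWQ0⟩ := quash ξ hξξ Q W hQQ hWQ
  have hWP : W * P = W := by
    have h1 : W * (P + Q) = W := by rw [hPQ1, mul_one]
    rw [mul_add, hWQ0, add_zero] at h1
    exact h1
  have hWann : ∀ X, X ∈ M → W * X * Q = 0 := by
    intro X hX
    have hDM : P * X * Q ∈ M := mul_mem (mul_mem hPM hX) hQM
    have hDcorner : P * (P * X * Q) * Q = P * X * Q := by
      simp only [← mul_assoc]; rw [hPP, mul_assoc (P * X) Q Q, hQQ]
    obtain ⟨hPD, hDQ, hQD, hDP⟩ := mulPQ (P * X * Q) hDcorner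
    have hDT : (P * X * Q) * T = 0 := by rw [mul_assoc (P * X) Q T, hQT, mul_zero]
    have hDS : (P * X * Q) * S = 0 := by rw [mul_assoc (P * X) Q S, hQS, mul_zero]
    have hTDc : P * (T * (P * X * Q)) * Q = T * (P * X * Q) := by
      simp only [← mul_assoc]
      rw [hPT, mul_assoc (T * P * X) Q Q, hQQ]
    have hSDc : P * (S * (P * X * Q)) * Q = S * (P * X * Q) := by
      simp only [← mul_assoc]
      rw [hPS, mul_assoc (S * P * X) Q Q, hQQ]
    have eTD : Φ (T * (P * X * Q)) = Φ T * (P * X * Q) - ξ • ((P * X * Q) * Φ T)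
        + (T * Φ (P * X * Q) - ξ • (Φ (P * X * Q) * T)) := by
      have h := hlie T hTM (P * X * Q) hDM
      rw [hDT] at h
      simpa only [smul_zero, sub_zero] using h
    have eSD : Φ (S * (P * X * Q)) = Φ S * (P * X * Q) - ξ • ((P * X * Q) * Φ S)
        + (S * Φ (P * X * Q) - ξ • (Φ (P * X * Q) * S)) := by
      have h := hlie S hSM (P * X * Q) hDM
      rw [hDS] at h
      simpa only [smul_zero, sub_zero] using h
    have eTSD : Φ (T * (P * X * Q) + S * (P * X * Q))
        = Φ (T + S) * (P * X * Q) - ξ • ((P * X * Q) * Φ (T + S))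
          + ((T + S) * Φ (P * X * Q) - ξ • (Φ (P * X * Q) * (T + S))) := by
      have h := hlie (T + S) hTSM (P * X * Q) hDM
      rw [mul_add (P * X * Q) T S, hDT, hDS, add_zero, add_mul T S (P * X * Q)] at h
      simpa only [smul_zero, sub_zero] using h
    have hadd : Φ (T * (P * X * Q) + S * (P * X * Q))
        = Φ (T * (P * X * Q)) + Φ (S * (P * X * Q)) :=
      claimC (T * (P * X * Q)) (mul_mem hTM hDM) hTDc
        (S * (P * X * Q)) (mul_mem hSM hDM) hSDc
    rw [hadd, eTD, eSD] at eTSD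
    have expand : W * (P * X * Q) - ξ • ((P * X * Q) * W)
        = (Φ (T + S) * (P * X * Q) - ξ • ((P * X * Q) * Φ (T + S))
            + ((T + S) * Φ (P * X * Q) - ξ • (Φ (P * X * Q) * (T + S))))
          - (Φ T * (P * X * Q) - ξ • ((P * X * Q) * Φ T)
            + (T * Φ (P * X * Q) - ξ • (Φ (P * X * Q) * T)))
          - (Φ S * (P * X * Q) - ξ • ((P * X * Q) * Φ S)
            + (S * Φ (P * X * Q) - ξ • (Φ (P * X * Q) * S))) := by
      rw [hWdef]
      simp only [sub_mul, mul_sub, smul_sub, add_mul, mul_add, smul_add]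
      abel
    rw [← eTSD] at expand
    have h0 : W * (P * X * Q) - ξ • ((P * X * Q) * W) = 0 := by rw [expand]; abel
    have hDW : (P * X * Q) * W = 0 := by rw [mul_assoc (P * X) Q W, hQW, mul_zero]
    rw [hDW, smul_zero, sub_zero] at h0
    calc W * X * Q = W * (P * X * Q) := by simp only [← mul_assoc]; rw [hWP]
      _ = 0 := h0
  have hW0 : W = 0 := RQ W hWann
  rw [hWdef] at hW0
  rw [sub_sub] at hW0
  exact sub_eq_zero.mp hW0

end Auxiliary

set_option maxHeartbeats 1000000 in
/-- **Claim 7 of Theorem 1.2.** A nonlinear ξ-Lie derivation `Φ` with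
`Φ P₁ = Φ P₂ = 0` is additive on the diagonal corners `M_{ii}`. -/
theorem xiLie_additive_on_diagonal (M : VonNeumannAlgebra H)
    (hM : VNNoTypeI1 M)
    (P₁ : H →L[ℂ] H) (hproj : VNProjection M P₁)
    (hnt : P₁ ≠ 0 ∧ P₁ ≠ 1) (hcf : VNCoreFree M P₁)
    (hcc : VNCentralCarrier M P₁ 1)
    (ξ : ℂ) (hξ0 : ξ ≠ 0) (hξ1 : ξ ≠ 1)
    (Φ : (H →L[ℂ] H) → (H →L[ℂ] H))
    (hmaps : ∀ T ∈ M, Φ T ∈ M)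
    (hlie : ∀ A ∈ M, ∀ B ∈ M,
      Φ (A * B - ξ • (B * A)) =
        (Φ A * B - ξ • (B * Φ A)) + (A * Φ B - ξ • (Φ B * A)))
    (hP1 : Φ P₁ = 0) (hP2 : Φ (1 - P₁) = 0) :
    ∀ Pi ∈ ({P₁, 1 - P₁} : Set (H →L[ℂ] H)),
      ∀ T ∈ M, Pi * T * Pi = T → ∀ S ∈ M, Pi * S * Pi = S →
        Φ (T + S) = Φ T + Φ S := by
  obtain ⟨hP1M, hP1sa, hP1P1⟩ := hproj
  have hP2M : (1 : H →L[ℂ] H) - P₁ ∈ M := sub_mem (one_mem M) hP1M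
  have hP2sa : IsSelfAdjoint ((1 : H →L[ℂ] H) - P₁) := (IsSelfAdjoint.one _).sub hP1sa
  have h12 : P₁ * (1 - P₁) = 0 := by rw [mul_sub, mul_one, hP1P1, sub_self]
  have h21 : (1 - P₁) * P₁ = 0 := by rw [sub_mul, one_mul, hP1P1, sub_self]
  have h22 : (1 - P₁) * (1 - P₁) = 1 - P₁ := by rw [sub_mul, one_mul, h12, sub_zero]
  have hcarP1 : ∀ Z, VNCentralProjection M Z → Z * P₁ = P₁ → Z = 1 := by
    intro Z hZ hZP
    have h := hcc.2.2 Z hZ hZP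
    rwa [one_mul] at h
  have hcarP2 : ∀ Z, VNCentralProjection M Z → Z * (1 - P₁) = 1 - P₁ → Z = 1 := by
    intro Z hZ hZP
    obtain ⟨⟨hZM, hZsa, hZZ⟩, hZcomm⟩ := hZ
    have hcp : VNCentralProjection M (1 - Z) := by
      refine ⟨⟨sub_mem (one_mem M) hZM, (IsSelfAdjoint.one _).sub hZsa, ?_⟩, ?_⟩
      · rw [sub_mul, one_mul, mul_sub, mul_one, hZZ, sub_self, sub_zero]
      · intro T hT
        rw [sub_mul, one_mul, mul_sub, mul_one, hZcomm T hT]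
    have h1 : (1 - Z) * P₁ = 1 - Z := by
      rw [mul_sub, mul_one] at hZP
      rw [sub_mul, one_mul]
      calc P₁ - Z * P₁ = (Z - Z * P₁) + P₁ - Z := by abel
        _ = (1 - P₁) + P₁ - Z := by rw [hZP]
        _ = 1 - Z := by abel
    have h0 := hcf (1 - Z) hcp h1
    exact (sub_eq_zero.mp h0).symm
  have RP1 := right_ann M P₁ hP1M hcarP1
  have RP2 := right_ann M (1 - P₁) hP2M hcarP2
  have LP1 := left_ann M P₁ hP1sa.star_eq RP1
  have LP2 := left_ann M (1 - P₁) hP2sa.star_eq RP2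
  intro Pi hPi
  simp only [Set.mem_insert_iff, Set.mem_singleton_iff] at hPi
  rcases hPi with rfl | rfl
  · exact diag_core M ξ hξ0 hξ1 Pi (1 - Pi) hP1M hP2M hP1P1 h22 h12 h21
      (by abel) Φ hlie hP1 hP2 RP2 LP1
  · exact diag_core M ξ hξ0 hξ1 (1 - P₁) P₁ hP2M hP1M h22 hP1P1 h21 h12
      (by abel) Φ hlie hP2 hP1 RP1 LP2
end
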